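/- arXiv:1909.02310 — 9 statements merged into one kernel-verified Lean document; each statement's English description precedes it below -/
import Mathlib

section
/- For a finite poset P on n elements and any positive integer m, the number of order-preserving maps P → [m] equals the sum over all linear extensions π of P of the binomial coefficient C(m + asc(π), n), where asc(π) is the number of ascents of π with respect to a fixed linear extension labeling ω : P → [n]. -/
open Classical in
/-- The number of ascents of the ordering `π` with respect to the labeling
`ω` : indices `i` with `ω (π i) < ω (π (i+1))`. -/
noncomputable def ascents {P : Type*} {n : ℕ} (ω : P → Fin n)
    (π : Fin n → P) : ℕ :=
  ((Finset.range (n - 1)).filter (fun i =>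
    ∃ h : i + 1 < n,
      ω (π ⟨i, Nat.lt_of_succ_lt h⟩) < ω (π ⟨i + 1, h⟩))).card

/-- A linear extension of the poset `P` with `n` elements, viewed as an
ordering `π = (π 0, …, π (n-1))` of the elements of `P` such that
`π i < π j` implies `i < j`. -/
def IsLinearExtension {P : Type*} [PartialOrder P] {n : ℕ}
    (π : Fin n ≃ P) : Prop :=
  ∀ i j : Fin n, π i < π j → i < j

set_option linter.unnecessarySimpa false

theorem adjStrictMono {n : ℕ} {α : Type*} [Preorder α] {f : Fin n → α}
    (h : ∀ i (hi : i + 1 < n), f ⟨i, Nat.lt_of_succ_lt hi⟩ < f ⟨i + 1, hi⟩) :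
    StrictMono f := by
  have key : ∀ j (hj : j < n) (i : Fin n), i.1 < j → f i < f ⟨j, hj⟩ := by
    intro j
    induction j with
    | zero => intro _ i h0; exact absurd h0 (Nat.not_lt_zero _)
    | succ k ih =>
      intro hj i hik
      have hk : k < n := Nat.lt_of_succ_lt hj
      have hlast : f ⟨k, hk⟩ < f ⟨k + 1, hj⟩ := h k hj
      rcases Nat.lt_or_ge i.1 k with h' | h'
      · exact (ih hk i h').trans hlast
      · have : i = ⟨k, hk⟩ := Fin.ext (show i.1 = k by omega)
        rw [this]; exact hlast
  intro i j hij
  have := key j.1 j.2 i hij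
  simpa using this

theorem strictMonoGap {n k : ℕ} {g : Fin n → Fin k} (hg : StrictMono g) :
    ∀ i j : Fin n, i.1 ≤ j.1 → (g i : ℕ) + (j.1 - i.1) ≤ g j := by
  have key : ∀ jv (hj : jv < n) (i : Fin n), i.1 ≤ jv →
      (g i : ℕ) + (jv - i.1) ≤ g ⟨jv, hj⟩ := by
    intro jv
    induction jv with
    | zero =>
      intro hj i hi
      have : i = ⟨0, hj⟩ := Fin.ext (show i.1 = 0 by omega)
      rw [this]; simp
    | succ k' ih =>
      intro hj i hi
      have hk : k' < n := Nat.lt_of_succ_lt hj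
      have hlt : (g ⟨k', hk⟩ : ℕ) < g ⟨k' + 1, hj⟩ :=
        hg (show (⟨k', hk⟩ : Fin n) < ⟨k' + 1, hj⟩ by simp [Fin.lt_def])
      rcases Nat.lt_or_ge i.1 (k' + 1) with h' | h'
      · have := ih hk i (by omega); omega
      · have : i = ⟨k' + 1, hj⟩ := Fin.ext (show i.1 = k' + 1 by omega)
        rw [this]; simp
  intro i j hij
  have := key j.1 j.2 i hij
  simpa using this


open Finset in
theorem card_strictMonoFilter (n K : ℕ) :
    ((Finset.univ : Finset (Fin n → Fin K)).filter fun g => StrictMono g).card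
      = K.choose n := by
  classical
  have h2 : ((Finset.univ : Finset (Finset (Fin K))).filter fun s => s.card = n).card
      = K.choose n := by
    rw [← Fintype.card_subtype]
    simpa using Fintype.card_finset_len (α := Fin K) n
  rw [← h2]
  refine card_bij' (i := fun g _ => image g univ)
    (j := fun s hs => fun idx => s.orderEmbOfFin (mem_filter.mp hs).2 idx)
    ?hi ?hj ?left ?right
  case hi =>
    intro g hg
    simp only [mem_filter, mem_univ, true_and] at hg ⊢
    rw [card_image_of_injective _ hg.injective, card_univ, Fintype.card_fin]
  case hj =>
    intro s hs
    simp only [mem_filter, mem_univ, true_and]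
    exact (s.orderEmbOfFin (mem_filter.mp hs).2).strictMono
  case left =>
    intro g hg
    have hg' : StrictMono g := (mem_filter.mp hg).2
    exact (orderEmbOfFin_unique _ (fun x => mem_image_of_mem _ (mem_univ x)) hg').symm
  case right =>
    intro s hs
    apply coe_injective
    rw [coe_image, coe_univ, Set.image_univ]
    exact range_orderEmbOfFin _ _

section Stanley
variable {P : Type*} [PartialOrder P] {n m : ℕ}

set_option linter.unusedSectionVars false

def Comp (ω : P ≃ Fin n) (π : Fin n ≃ P) (σ : P → Fin m) : Prop :=
  StrictMono (fun i : Fin n => toLex (σ (π i), ω (π i)))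

theorem comp_iff_adj (ω : P ≃ Fin n) (π : Fin n ≃ P) (σ : P → Fin m) :
    Comp ω π σ ↔ ∀ i (hi : i + 1 < n),
      σ (π ⟨i, Nat.lt_of_succ_lt hi⟩) ≤ σ (π ⟨i + 1, hi⟩) ∧
      (ω (π ⟨i + 1, hi⟩) < ω (π ⟨i, Nat.lt_of_succ_lt hi⟩) →
        σ (π ⟨i, Nat.lt_of_succ_lt hi⟩) < σ (π ⟨i + 1, hi⟩)) := by
  constructor
  · intro hc i hi
    have hlt := hc (show (⟨i, Nat.lt_of_succ_lt hi⟩ : Fin n) < ⟨i + 1, hi⟩ by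
      simp [Fin.lt_def])
    rw [Prod.Lex.lt_iff] at hlt
    constructor
    · rcases hlt with h | ⟨h, _⟩
      · exact le_of_lt h
      · exact le_of_eq h
    · intro hdes
      rcases hlt with h | ⟨_, h2⟩
      · exact h
      · exact absurd h2 (asymm hdes)
  · intro h
    apply adjStrictMono
    intro i hi
    rw [Prod.Lex.lt_iff]
    obtain ⟨h1, h2⟩ := h i hi
    rcases h1.eq_or_lt with he | hl
    · right
      refine ⟨he, ?_⟩
      have hne : ω (π ⟨i, Nat.lt_of_succ_lt hi⟩) ≠ ω (π ⟨i + 1, hi⟩) := by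
        intro hh
        have := π.injective (ω.injective hh)
        rw [Fin.mk.injEq] at this
        omega
      rcases hne.lt_or_gt with hgood | hbad
      · exact hgood
      · exact absurd he (h2 hbad).ne
    · left; exact hl

theorem comp_iff_sort (ω : P ≃ Fin n) (π : Fin n ≃ P) (σ : P → Fin m) :
    Comp ω π σ ↔ (π.trans ω : Equiv.Perm (Fin n)) =
      Tuple.sort (fun j => σ (ω.symm j)) := by
  rw [Tuple.eq_sort_iff]
  constructor
  · intro hc
    constructor
    · intro i j hij
      rcases hij.eq_or_lt with rfl | hlt
      · exact le_rfl
      · have hl := hc hlt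
        rw [Prod.Lex.lt_iff] at hl
        simp only [Function.comp_apply, Equiv.trans_apply, Equiv.symm_apply_apply]
        rcases hl with h | ⟨h, _⟩
        · exact le_of_lt h
        · exact le_of_eq h
    · intro i j hij heq
      have hl := hc hij
      rw [Prod.Lex.lt_iff] at hl
      simp only [Equiv.trans_apply, Equiv.symm_apply_apply] at heq ⊢
      rcases hl with h | ⟨_, h2⟩
      · exact absurd heq h.ne
      · exact h2
  · rintro ⟨h1, h2⟩ i j hij
    rw [Prod.Lex.lt_iff]
    have hm : σ (π i) ≤ σ (π j) := by
      have := h1 hij.le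
      simpa using this
    rcases hm.eq_or_lt with he | hl
    · right
      refine ⟨he, ?_⟩
      have := h2 i j hij (by simpa using he)
      simpa using this
    · left; exact hl

theorem linext_of_comp (ω : P ≃ Fin n) (hω : Monotone ω) {π : Fin n ≃ P}
    {σ : P → Fin m} (hσ : Monotone σ) (hc : Comp ω π σ) : IsLinearExtension π := by
  intro i j hij
  have h1 : σ (π i) ≤ σ (π j) := hσ hij.le
  have h2 : ω (π i) < ω (π j) := (hω.strictMono_of_injective ω.injective) hij
  have hlex : toLex (σ (π i), ω (π i)) < toLex (σ (π j), ω (π j)) := by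
    rw [Prod.Lex.lt_iff]
    rcases h1.eq_or_lt with he | hl
    · exact Or.inr ⟨he, h2⟩
    · exact Or.inl hl
  exact hc.lt_iff_lt.mp hlex

theorem mono_of_comp (ω : P ≃ Fin n) {π : Fin n ≃ P} {σ : P → Fin m}
    (hlin : IsLinearExtension π) (hc : Comp ω π σ) : Monotone σ := by
  intro p q hpq
  rcases hpq.eq_or_lt with rfl | hlt
  · exact le_rfl
  · have hπ : π (π.symm p) < π (π.symm q) := by simpa using hlt
    have hij := hlin _ _ hπ
    have hl := hc hij
    rw [Prod.Lex.lt_iff] at hl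
    rcases hl with h | ⟨h, _⟩
    · have := h.le; simpa using this
    · have := h.le; simpa using this


open Finset in
open Classical in
theorem card_comp [Fintype P] (ω : P ≃ Fin n) (π : Fin n ≃ P) :
    ((Finset.univ : Finset (P → Fin m)).filter fun σ => Comp ω π σ).card
      = (m + ascents (fun p => ω p) (fun i => π i)).choose n := by
  classical
  set A := ascents (fun p => ω p) (fun i => π i) with hA
  set S : Finset ℕ := (Finset.range (n - 1)).filter (fun i =>
    ∃ h : i + 1 < n, ω (π ⟨i, Nat.lt_of_succ_lt h⟩) < ω (π ⟨i + 1, h⟩)) with hS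
  have hSA : S.card = A := by
    rw [hA, hS]; simp only [ascents, Finset.filter_congr_decidable]
  have hmemS : ∀ i : ℕ, i ∈ S ↔
      ∃ h : i + 1 < n, ω (π ⟨i, Nat.lt_of_succ_lt h⟩) < ω (π ⟨i + 1, h⟩) := by
    intro i
    rw [hS, mem_filter, mem_range]
    constructor
    · exact fun h => h.2
    · rintro ⟨h, hh⟩
      exact ⟨by omega, h, hh⟩
  set a : ℕ → ℕ := fun i => (S ∩ Finset.range i).card with ha
  have haA : ∀ i, a i ≤ A := fun i => by
    rw [← hSA]; exact card_le_card inter_subset_left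
  have hale : ∀ i, a i ≤ i := fun i => by
    have h := card_le_card (inter_subset_right : S ∩ Finset.range i ⊆ Finset.range i)
    simpa using h
  have hsucc : ∀ i, i ∈ S → a (i + 1) = a i + 1 := by
    intro i hi
    have hset : S ∩ Finset.range (i + 1) = insert i (S ∩ Finset.range i) := by
      ext x
      simp only [mem_inter, mem_range, mem_insert, Nat.lt_succ_iff_lt_or_eq]
      constructor
      · rintro ⟨hxS, h | h⟩
        · exact Or.inr ⟨hxS, h⟩
        · exact Or.inl h
      · rintro (rfl | ⟨hxS, h⟩)
        · exact ⟨hi, Or.inr rfl⟩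
        · exact ⟨hxS, Or.inl h⟩
    rw [ha]
    simp only
    rw [hset, card_insert_of_notMem (by simp)]
  have hnsucc : ∀ i, i ∉ S → a (i + 1) = a i := by
    intro i hi
    have hset : S ∩ Finset.range (i + 1) = S ∩ Finset.range i := by
      ext x
      simp only [mem_inter, mem_range, Nat.lt_succ_iff_lt_or_eq]
      constructor
      · rintro ⟨hxS, h | rfl⟩
        · exact ⟨hxS, h⟩
        · exact absurd hxS hi
      · rintro ⟨hxS, h⟩
        exact ⟨hxS, Or.inl h⟩
    rw [ha]
    simp only
    rw [hset]
  have hlow : ∀ i, i < n → A ≤ a i + (n - 1 - i) := by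
    intro i hi
    have h1 : a i + (S \ Finset.range i).card = S.card :=
      card_inter_add_card_sdiff S (Finset.range i)
    have h2 : S \ Finset.range i ⊆ Finset.range (n - 1) \ Finset.range i := by
      apply sdiff_subset_sdiff _ Subset.rfl
      rw [hS]; exact filter_subset _ _
    have h3 : (Finset.range (n - 1) \ Finset.range i).card ≤ n - 1 - i := by
      rcases le_or_gt i (n - 1) with h | h
      · rw [card_sdiff_of_subset (by exact Finset.range_subset_range.mpr h)]
        simp
      · have : Finset.range (n - 1) \ Finset.range i = ∅ := by
          rw [sdiff_eq_empty_iff_subset]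
          exact Finset.range_subset_range.mpr (by omega)
        rw [this]; simp
    have h4 := card_le_card h2
    rw [← hSA]
    omega
  -- the bijection with strictly monotone maps
  rw [← card_strictMonoFilter n (m + A)]
  refine card_bij'
    (i := fun σ _ => fun idx : Fin n => (⟨(σ (π idx) : ℕ) + a idx.1, by
      have h1 := (σ (π idx)).isLt
      have h2 := haA idx.1
      omega⟩ : Fin (m + A)))
    (j := fun g hg => fun p : P => (⟨(g (π.symm p) : ℕ) - a (π.symm p).1, by
      have hg' : StrictMono g := (mem_filter.mp hg).2
      have h0 : n - 1 < n := by have := (π.symm p).2; omega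
      have hgap := strictMonoGap hg' (π.symm p) ⟨n - 1, h0⟩
        (Nat.le_pred_of_lt (π.symm p).2)
      have hlast : (g ⟨n - 1, h0⟩ : ℕ) < m + A := (g _).isLt
      have hlo := hlow (π.symm p).1 (π.symm p).2
      have h0' : 0 < n := by have := (π.symm p).2; omega
      have hge := strictMonoGap hg' ⟨0, h0'⟩ (π.symm p) (Nat.zero_le _)
      have hai := hale (π.symm p).1
      simp only [Fin.val_mk] at hgap hge
      omega⟩ : Fin m))
    ?hi ?hj ?left ?right
  case hi =>
    intro σ hσ
    have hc : Comp ω π σ := (mem_filter.mp hσ).2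
    simp only [mem_filter, mem_univ, true_and]
    apply adjStrictMono
    intro k hk
    have hadj := (comp_iff_adj ω π σ).mp hc k hk
    rw [Fin.mk_lt_mk]
    simp only [Fin.val_mk]
    by_cases hmem : k ∈ S
    · have hs1 := hsucc k hmem
      have h1 : (σ (π ⟨k, Nat.lt_of_succ_lt hk⟩) : ℕ) ≤ σ (π ⟨k + 1, hk⟩) := hadj.1
      omega
    · have hs1 := hnsucc k hmem
      have hdes : ω (π ⟨k + 1, hk⟩) < ω (π ⟨k, Nat.lt_of_succ_lt hk⟩) := by
        have hne : ω (π ⟨k, Nat.lt_of_succ_lt hk⟩) ≠ ω (π ⟨k + 1, hk⟩) := by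
          intro hh
          have := π.injective (ω.injective hh)
          rw [Fin.mk.injEq] at this
          omega
        rcases hne.lt_or_gt with hgood | hbad
        · exact absurd ((hmemS k).mpr ⟨hk, hgood⟩) hmem
        · exact hbad
      have h2 : (σ (π ⟨k, Nat.lt_of_succ_lt hk⟩) : ℕ) < σ (π ⟨k + 1, hk⟩) :=
        hadj.2 hdes
      omega
  case hj =>
    intro g hg
    have hg' : StrictMono g := (mem_filter.mp hg).2
    simp only [mem_filter, mem_univ, true_and]
    rw [comp_iff_adj]
    intro k hk
    simp only [Equiv.symm_apply_apply, Fin.val_mk]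
    have hlt : (g ⟨k, Nat.lt_of_succ_lt hk⟩ : ℕ) < g ⟨k + 1, hk⟩ :=
      hg' (by simp [Fin.lt_def])
    have hak : a k ≤ (g ⟨k, Nat.lt_of_succ_lt hk⟩ : ℕ) := by
      have h0 : 0 < n := by omega
      have := strictMonoGap hg' ⟨0, h0⟩ ⟨k, Nat.lt_of_succ_lt hk⟩ (Nat.zero_le k)
      have := hale k
      simp only [Fin.val_mk] at *
      omega
    constructor
    · rw [Fin.mk_le_mk]
      try simp only [Fin.val_mk]
      by_cases hmem : k ∈ S
      · have := hsucc k hmem; omega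
      · have := hnsucc k hmem; omega
    · intro hdes
      rw [Fin.mk_lt_mk]
      try simp only [Fin.val_mk]
      have hnot : k ∉ S := by
        intro hm
        obtain ⟨hh, hasc⟩ := (hmemS k).mp hm
        exact absurd hasc (asymm hdes)
      have := hnsucc k hnot
      omega
  case left =>
    intro σ hσ
    funext p
    apply Fin.ext
    show ((σ (π (π.symm p)) : ℕ) + a (π.symm p).1) - a (π.symm p).1 = (σ p : ℕ)
    rw [Equiv.apply_symm_apply]
    omega
  case right =>
    intro g hg
    have hg' : StrictMono g := (mem_filter.mp hg).2
    funext idx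
    apply Fin.ext
    show ((g (π.symm (π idx)) : ℕ) - a (π.symm (π idx)).1) + a idx.1 = (g idx : ℕ)
    rw [Equiv.symm_apply_apply]
    have hak : a idx.1 ≤ (g idx : ℕ) := by
      have h0 : 0 < n := by have := idx.2; omega
      have h1 := strictMonoGap hg' ⟨0, h0⟩ idx (Nat.zero_le _)
      have := hale idx.1
      simp only [Fin.val_mk] at h1
      omega
    omega

end Stanley

open Classical in
/-- Stanley: for a finite poset `P` on `n` elements with a fixed
order-preserving bijective labeling `ω : P → [n]`, and any positive integer
`m`, the number of order-preserving maps `P → [m]` equals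
`Σ_{π} C(m + asc(π), n)`, summed over all linear extensions `π` of `P`. -/
theorem orderPoly_eq_sum_choose_ascents {P : Type*} [Fintype P] [PartialOrder P]
    {n : ℕ} (hn : Fintype.card P = n)
    (ω : P ≃ Fin n) (hω : Monotone ω)
    (m : ℕ) (hm : 0 < m) :
    Nat.card {σ : P → Fin m // Monotone σ} =
      ∑ π ∈ Finset.univ.filter
          (fun π : Fin n ≃ P => IsLinearExtension π),
        (m + ascents (fun p => ω p) (fun i => π i)).choose n := by
  classical
  rw [Nat.card_eq_fintype_card, Fintype.card_subtype]
  have hmap : ∀ σ ∈ Finset.univ.filter (fun σ : P → Fin m => Monotone σ),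
      (Tuple.sort (fun j => σ (ω.symm j))).trans ω.symm ∈
        Finset.univ.filter (fun π : Fin n ≃ P => IsLinearExtension π) := by
    intro σ hσ
    have hσm : Monotone σ := (Finset.mem_filter.mp hσ).2
    rw [Finset.mem_filter]
    refine ⟨Finset.mem_univ _, ?_⟩
    have hsort : (((Tuple.sort (fun j => σ (ω.symm j))).trans ω.symm).trans ω
        : Equiv.Perm (Fin n)) = Tuple.sort (fun j => σ (ω.symm j)) := by
      ext i
      simp
    have hc := (comp_iff_sort ω _ σ).mpr hsort
    exact linext_of_comp ω hω hσm hc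
  rw [Finset.card_eq_sum_card_fiberwise hmap]
  refine Finset.sum_congr rfl fun π hπ => ?_
  have hlin : IsLinearExtension π := (Finset.mem_filter.mp hπ).2
  have hset : (Finset.univ.filter (fun σ : P → Fin m => Monotone σ)).filter
      (fun σ => (Tuple.sort (fun j => σ (ω.symm j))).trans ω.symm = π)
      = Finset.univ.filter (fun σ => Comp ω π σ) := by
    ext σ
    simp only [Finset.mem_filter, Finset.mem_univ, true_and]
    constructor
    · rintro ⟨hm', hsort⟩
      apply (comp_iff_sort ω π σ).mpr
      rw [← hsort]
      ext i
      simp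
    · intro hc
      have hsort := (comp_iff_sort ω π σ).mp hc
      refine ⟨mono_of_comp ω hlin hc, ?_⟩
      rw [← hsort]
      ext i
      simp
  rw [hset]
  exact card_comp ω π
end

section
/- For a finite poset P on n elements, the strict order polynomial and the order polynomial satisfy Ω̄(P, m) = (−1)^n Ω(P, −m) for all positive integers m, as an identity of polynomials. -/
open Finset Polynomial

namespace StanleyRec

variable (P : Type*) [Fintype P] [PartialOrder P] [DecidableEq P]

abbrev Dn := {I : Finset P // ∀ ⦃a b : P⦄, a ≤ b → b ∈ I → a ∈ I}

noncomputable instance : Fintype (Dn P) := by classical exact Subtype.fintype _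

def dbot : Dn P := ⟨∅, by simp⟩
def dtop : Dn P := ⟨univ, fun a b _ _ => mem_univ a⟩

open Classical in
noncomputable def Zm : Matrix (Dn P) (Dn P) ℚ := fun I J => if I.1 ⊆ J.1 then 1 else 0
open Classical in
noncomputable def Nm : Matrix (Dn P) (Dn P) ℚ := fun I J => if I.1 ⊂ J.1 then 1 else 0
open Classical in
noncomputable def Wm : Matrix (Dn P) (Dn P) ℚ := fun I J =>
  if I.1 ⊆ J.1 ∧ IsAntichain (· ≤ ·) ((J.1 \ I.1 : Finset P) : Set P)
  then (-1) ^ ((J.1 \ I.1).card) else 0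

lemma Zm_eq : Zm P = 1 + Nm P := by
  ext I J
  simp only [Matrix.add_apply, Zm, Nm, Matrix.one_apply]
  by_cases h : I = J
  · subst h
    simp only [Finset.Subset.refl, if_true, if_pos rfl]
    rw [if_neg (by exact fun hh => (lt_irrefl _ (hh : I.1 ⊂ I.1))), add_zero]
  · have h' : I.1 ≠ J.1 := fun hh => h (Subtype.ext hh)
    by_cases hs : I.1 ⊆ J.1
    · simp [hs, h, Finset.ssubset_iff_subset_ne.2 ⟨hs, h'⟩]
    · rw [if_neg hs, if_neg h, if_neg (fun hss : I.1 ⊂ J.1 => hs hss.1), add_zero]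

lemma Nm_pow_card_le {k : ℕ} {I J : Dn P} (h : ((Nm P) ^ k) I J ≠ 0) :
    k + I.1.card ≤ J.1.card := by
  induction k generalizing J with
  | zero =>
    simp only [pow_zero, Matrix.one_apply, ne_eq, ite_eq_right_iff, one_ne_zero] at h
    have : I = J := by by_contra hne; exact h (fun hh => absurd hh hne)
    simp [this]
  | succ k ih =>
    rw [pow_succ, Matrix.mul_apply] at h
    obtain ⟨L, hL⟩ := Finset.exists_ne_zero_of_sum_ne_zero h
    have h1 : ((Nm P) ^ k) I L ≠ 0 := fun hh => hL.2 (by rw [hh, zero_mul])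
    have h2 : (Nm P) L J ≠ 0 := fun hh => hL.2 (by rw [hh, mul_zero])
    have hLJ : L.1 ⊂ J.1 := by
      by_contra hc; exact h2 (by simp [Nm, hc])
    have := ih h1
    have := Finset.card_lt_card hLJ
    omega

lemma Nm_pow_eq_zero : (Nm P) ^ (Fintype.card P + 1) = 0 := by
  ext I J
  simp only [Matrix.zero_apply]
  by_contra h
  have h1 := Nm_pow_card_le P h
  have h2 : J.1.card ≤ Fintype.card P := by
    simpa using Finset.card_le_card (Finset.subset_univ J.1)
  omega

lemma Wm_mul_Zm : Wm P * Zm P = 1 := by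
  classical
  ext I K
  rw [Matrix.mul_apply]
  by_cases hIK : I = K
  · subst hIK
    rw [Matrix.one_apply_eq]
    rw [Finset.sum_eq_single I]
    · have he : I.1 \ I.1 = (∅ : Finset P) := Finset.sdiff_self _
      simp [Wm, Zm, Finset.Subset.refl, he, (Set.subsingleton_empty).isAntichain (· ≤ ·)]
    · intro J _ hJ
      by_cases hs : I.1 ⊆ J.1 ∧ J.1 ⊆ I.1
      · exact (hJ (Subtype.ext (Finset.Subset.antisymm hs.1 hs.2)).symm).elim
      · rcases not_and_or.1 hs with hs | hs
        · simp [Wm, hs]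
        · simp [Zm, hs]
    · simp
  · rw [Matrix.one_apply_ne hIK]
    by_cases hsub : I.1 ⊆ K.1
    · have hss : I.1 ≠ K.1 := fun hh => hIK (Subtype.ext hh)
      set A : Finset P := (K.1 \ I.1).filter (fun a => ∀ b ∈ K.1 \ I.1, ¬ b < a) with hA
      have hAsub : A ⊆ K.1 \ I.1 := Finset.filter_subset _ _
      have hAne : A.Nonempty := by
        obtain ⟨a, ha, hmin⟩ := Finset.exists_minimal (s := K.1 \ I.1) (by
          rw [Finset.sdiff_nonempty]
          exact fun h => hss (Finset.Subset.antisymm hsub h))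
        exact ⟨a, Finset.mem_filter.2 ⟨ha, fun b hb hba => hba.not_ge (hmin hb hba.le)⟩⟩
      have h1 : ∀ J : Dn P, Wm P I J * Zm P J K =
          if (I.1 ⊆ J.1 ∧ IsAntichain (· ≤ ·) ((J.1 \ I.1 : Finset P) : Set P) ∧ J.1 ⊆ K.1)
          then ((-1:ℚ))^((J.1 \ I.1).card) else 0 := by
        intro J
        simp only [Wm, Zm]
        by_cases hw : I.1 ⊆ J.1 ∧ IsAntichain (· ≤ ·) ((J.1 \ I.1 : Finset P) : Set P)
        · by_cases hz : J.1 ⊆ K.1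
          · rw [if_pos hw, if_pos hz, if_pos ⟨hw.1, hw.2, hz⟩, mul_one]
          · rw [if_neg hz, mul_zero, if_neg (fun hc => hz hc.2.2)]
        · rw [if_neg hw, zero_mul, if_neg (fun hc => hw ⟨hc.1, hc.2.1⟩)]
      rw [Finset.sum_congr rfl (fun J _ => h1 J), ← Finset.sum_filter]
      have key : ∑ S ∈ A.powerset, ((-1:ℚ))^(S.card) =
          ∑ J ∈ Finset.univ.filter (fun J : Dn P =>
            I.1 ⊆ J.1 ∧ IsAntichain (· ≤ ·) ((J.1 \ I.1 : Finset P) : Set P) ∧ J.1 ⊆ K.1),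
            ((-1:ℚ))^((J.1 \ I.1).card) := by
        apply Finset.sum_bij (i := fun (S : Finset P) (hS : S ∈ A.powerset) =>
          (⟨I.1 ∪ S, by
            intro a b hab hb
            rcases Finset.mem_union.1 hb with hb | hb
            · exact Finset.mem_union_left _ (I.2 hab hb)
            · have hSA : S ⊆ A := Finset.mem_powerset.1 hS
              have hbA := hSA hb
              have hbKI := hAsub hbA
              have haK : a ∈ K.1 := K.2 hab (Finset.mem_sdiff.1 hbKI).1
              by_cases haI : a ∈ I.1
              · exact Finset.mem_union_left _ haI
              · have haKI : a ∈ K.1 \ I.1 := Finset.mem_sdiff.2 ⟨haK, haI⟩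
                have hmin := (Finset.mem_filter.1 hbA).2 a haKI
                have : a = b := le_antisymm hab (by
                  by_contra hba
                  exact hmin (lt_of_le_of_ne hab (fun he => hba (he ▸ le_refl a))))
                exact Finset.mem_union_right _ (this ▸ hb)⟩ : Dn P))
        · intro S hS
          have hSA : S ⊆ A := Finset.mem_powerset.1 hS
          have hdisj : Disjoint S I.1 :=
            Finset.disjoint_of_subset_left (hSA.trans hAsub) Finset.sdiff_disjoint
          have hdiff : (I.1 ∪ S) \ I.1 = S := by
            rw [Finset.union_sdiff_left, Finset.sdiff_eq_self_iff_disjoint.2 hdisj]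
          refine Finset.mem_filter.2 ⟨Finset.mem_univ _, Finset.subset_union_left, ?_, ?_⟩
          · rw [hdiff]
            intro a ha b hb hne hle
            have haA := hSA ha
            have hbA := hSA hb
            have := (Finset.mem_filter.1 hbA).2 a (hAsub haA)
            exact this (lt_of_le_of_ne hle hne)
          · apply Finset.union_subset hsub ((hSA.trans hAsub).trans (Finset.sdiff_subset))
        · intro S hS S' hS' he
          have hd : ∀ T : Finset P, T ∈ A.powerset → (I.1 ∪ T) \ I.1 = T := by
            intro T hT
            have : Disjoint T I.1 := Finset.disjoint_of_subset_left
              ((Finset.mem_powerset.1 hT).trans hAsub) Finset.sdiff_disjoint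
            rw [Finset.union_sdiff_left, Finset.sdiff_eq_self_iff_disjoint.2 this]
          have he' : I.1 ∪ S = I.1 ∪ S' := congrArg Subtype.val he
          rw [← hd S hS, ← hd S' hS', he']
        · intro J hJ
          obtain ⟨-, hIJ, hanti, hJK⟩ := Finset.mem_filter.1 hJ
          refine ⟨J.1 \ I.1, Finset.mem_powerset.2 ?_, ?_⟩
          · intro s hs
            have hsKI : s ∈ K.1 \ I.1 := Finset.mem_sdiff.2
              ⟨hJK (Finset.mem_sdiff.1 hs).1, (Finset.mem_sdiff.1 hs).2⟩
            refine Finset.mem_filter.2 ⟨hsKI, ?_⟩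
            intro b hb hbs
            have hbJ : b ∈ J.1 := J.2 hbs.le (Finset.mem_sdiff.1 hs).1
            have hbJI : b ∈ J.1 \ I.1 := Finset.mem_sdiff.2 ⟨hbJ, (Finset.mem_sdiff.1 hb).2⟩
            exact hanti (Finset.mem_coe.2 hbJI) (Finset.mem_coe.2 hs) (ne_of_lt hbs) hbs.le
          · exact Subtype.ext (Finset.union_sdiff_of_subset hIJ)
        · intro S hS
          have : Disjoint S I.1 := Finset.disjoint_of_subset_left
            ((Finset.mem_powerset.1 hS).trans hAsub) Finset.sdiff_disjoint
          rw [Finset.union_sdiff_left, Finset.sdiff_eq_self_iff_disjoint.2 this]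
      rw [← key]
      have : ∑ S ∈ A.powerset, ((-1:ℚ))^(S.card) =
          (((∑ S ∈ A.powerset, ((-1:ℤ))^(S.card)) : ℤ) : ℚ) := by push_cast; rfl
      rw [this, Finset.sum_powerset_neg_one_pow_card_of_nonempty hAne, Int.cast_zero]
    · apply Finset.sum_eq_zero
      intro J _
      by_cases h1 : I.1 ⊆ J.1
      · by_cases h2 : J.1 ⊆ K.1
        · exact (hsub (h1.trans h2)).elim
        · simp [Zm, h2]
      · simp [Wm, h1]


noncomputable def qpoly (n : ℕ) : Polynomial ℚ :=
  ∑ k ∈ Finset.range (n+1), monomial k ((-1:ℚ)^k)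

lemma qpoly_coeff {n k : ℕ} (h : k ≤ n) : (qpoly n).coeff k = (-1:ℚ)^k := by
  rw [qpoly, finset_sum_coeff]
  rw [Finset.sum_eq_single k]
  · simp
  · intro b _ hb; rw [coeff_monomial, if_neg hb]
  · intro hk; exact absurd (Finset.mem_range.2 (by omega)) hk

lemma hockey (r k : ℕ) : ∑ j ∈ Finset.range (k+1), (r+j).choose j = (r+k+1).choose k := by
  induction k with
  | zero => simp
  | succ k ih =>
    rw [Finset.sum_range_succ, ih, show r+(k+1) = r+k+1 by ring,
        Nat.choose_succ_succ (r+k+1) k]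

lemma qpoly_pow_coeff {n : ℕ} (r : ℕ) {k : ℕ} (h : k ≤ n) :
    ((qpoly n)^(r+1)).coeff k = (-1:ℚ)^k * ((r+k).choose k : ℚ) := by
  induction r generalizing k with
  | zero => rw [pow_one, qpoly_coeff h]; simp
  | succ r ih =>
    rw [pow_succ, coeff_mul, Finset.Nat.sum_antidiagonal_eq_sum_range_succ_mk]
    have hterm : ∀ j ∈ Finset.range (k+1),
        ((qpoly n)^(r+1)).coeff j * (qpoly n).coeff (k - j)
          = (-1:ℚ)^k * ((r+j).choose j : ℚ) := by
      intro j hj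
      have hjk : j ≤ k := Nat.lt_succ_iff.1 (Finset.mem_range.1 hj)
      rw [ih (le_trans hjk h), qpoly_coeff (le_trans (Nat.sub_le k j) h)]
      rw [mul_comm ((-1:ℚ)^j) _, mul_assoc, ← pow_add]
      rw [show j + (k - j) = k by omega, mul_comm]
    rw [Finset.sum_congr rfl hterm, ← Finset.mul_sum]
    have : ∑ j ∈ Finset.range (k+1), ((r+j).choose j : ℚ) = (((r+k+1).choose k : ℕ) : ℚ) := by
      rw [← hockey r k]; push_cast; rfl
    rw [this, show r+1+k = r+k+1 by ring]

section MatrixAlg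

variable (P : Type*) [Fintype P] [PartialOrder P] [DecidableEq P]

lemma aeval_trunc (p : Polynomial ℚ) :
    Polynomial.aeval (Nm P) p
      = ∑ k ∈ Finset.range (Fintype.card P + 1), p.coeff k • (Nm P)^k := by
  set n := Fintype.card P
  set B := max (p.natDegree + 1) (n+1) with hB
  have h1 : Polynomial.aeval (Nm P) p = ∑ k ∈ Finset.range B, p.coeff k • (Nm P)^k :=
    Polynomial.aeval_eq_sum_range' (lt_of_lt_of_le (Nat.lt_succ_self _) (le_max_left _ _)) _
  rw [h1, Finset.range_eq_Ico,
    ← Finset.sum_Ico_consecutive (fun k => p.coeff k • (Nm P)^k)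
      (Nat.zero_le (n+1)) (le_max_right _ _)]
  have h2 : ∑ k ∈ Finset.Ico (n+1) B, p.coeff k • (Nm P)^k = 0 := by
    apply Finset.sum_eq_zero
    intro i hi
    rw [pow_eq_zero_of_le (Finset.mem_Ico.1 hi).1 (Nm_pow_eq_zero P), smul_zero]
  rw [h2, add_zero, ← Finset.range_eq_Ico]

lemma aeval_entry (p : Polynomial ℚ) :
    Polynomial.aeval (Nm P) p (dbot P) (dtop P)
      = ∑ k ∈ Finset.range (Fintype.card P + 1),
          p.coeff k * (((Nm P)^k) (dbot P) (dtop P)) := by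
  rw [aeval_trunc]
  rw [show ((∑ k ∈ Finset.range (Fintype.card P + 1), p.coeff k • (Nm P)^k) (dbot P) (dtop P))
    = ∑ k ∈ Finset.range (Fintype.card P + 1), (p.coeff k • (Nm P)^k) (dbot P) (dtop P) by
      rw [Matrix.sum_apply]]
  rfl

lemma Zm_aeval : Zm P = Polynomial.aeval (Nm P) (1 + Polynomial.X : Polynomial ℚ) := by
  have : (Polynomial.aeval (Nm P)) (1 + Polynomial.X : Polynomial ℚ) = 1 + Nm P := by
    simp only [map_add, Polynomial.aeval_one, Polynomial.aeval_X]
  rw [this, Zm_eq]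

lemma qpoly_mul : qpoly (Fintype.card P) * (1 + Polynomial.X)
    = 1 + monomial (Fintype.card P + 1) ((-1:ℚ)^(Fintype.card P)) := by
  set n := Fintype.card P
  rw [mul_add, mul_one, qpoly, Finset.sum_mul]
  have h1 : ∀ k, (monomial k ((-1:ℚ)^k)) * Polynomial.X = monomial (k+1) ((-1:ℚ)^k) := by
    intro k
    rw [Polynomial.monomial_mul_X]
  rw [Finset.sum_congr rfl (fun k _ => h1 k)]
  rw [Finset.sum_range_succ' (fun k => (monomial k ((-1:ℚ)^k))) n]
  rw [Finset.sum_range_succ (fun k => (monomial (k+1) ((-1:ℚ)^k))) n]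
  have h2 : ∀ k, (monomial (k+1) ((-1:ℚ)^(k+1))) + (monomial (k+1) ((-1:ℚ)^k)) = 0 := by
    intro k
    rw [← map_add]
    rw [show (-1:ℚ)^(k+1) + (-1:ℚ)^k = 0 by rw [pow_succ]; ring, Polynomial.monomial_zero_right]
  have : (∑ k ∈ Finset.range n, (monomial (k+1) ((-1:ℚ)^(k+1))) + monomial 0 ((-1:ℚ)^0))
      + (∑ k ∈ Finset.range n, (monomial (k+1) ((-1:ℚ)^k)) + monomial (n+1) ((-1:ℚ)^n))
      = (∑ k ∈ Finset.range n,
          ((monomial (k+1) ((-1:ℚ)^(k+1))) + (monomial (k+1) ((-1:ℚ)^k))))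
        + (monomial 0 ((-1:ℚ)^0) + monomial (n+1) ((-1:ℚ)^n)) := by
    rw [Finset.sum_add_distrib]; ring
  rw [this, Finset.sum_congr rfl (fun k _ => h2 k), Finset.sum_const_zero, zero_add]
  rw [pow_zero, Polynomial.monomial_zero_left, Polynomial.C_1]

lemma Wm_aeval : Wm P = Polynomial.aeval (Nm P) (qpoly (Fintype.card P)) := by
  set n := Fintype.card P
  set M := Polynomial.aeval (Nm P) (qpoly n) with hM
  have haux : Polynomial.aeval (Nm P) (1 + monomial (n + 1) ((-1:ℚ)^n)) = 1 := by
    rw [map_add, map_one, Polynomial.aeval_monomial, Nm_pow_eq_zero, mul_zero, add_zero]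
  have hMZ : M * Zm P = 1 := by
    rw [hM, Zm_aeval, ← map_mul, qpoly_mul, haux]
  have hZM : Zm P * M = 1 := by
    rw [hM, Zm_aeval, ← map_mul, mul_comm (1 + Polynomial.X) _, qpoly_mul, haux]
  calc Wm P = Wm P * (Zm P * M) := by rw [hZM, mul_one]
  _ = (Wm P * Zm P) * M := by rw [mul_assoc]
  _ = M := by rw [Wm_mul_Zm, one_mul]

lemma Zm_pow_entry (m : ℕ) :
    ((Zm P)^m) (dbot P) (dtop P)
      = ∑ k ∈ Finset.range (Fintype.card P + 1),
          (m.choose k : ℚ) * (((Nm P)^k) (dbot P) (dtop P)) := by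
  rw [Zm_aeval, ← map_pow, aeval_entry]
  exact Finset.sum_congr rfl (fun k _ => by rw [Polynomial.coeff_one_add_X_pow])

lemma Wm_pow_entry (r : ℕ) :
    ((Wm P)^(r+1)) (dbot P) (dtop P)
      = ∑ k ∈ Finset.range (Fintype.card P + 1),
          ((-1:ℚ)^k * ((r+k).choose k : ℚ)) * (((Nm P)^k) (dbot P) (dtop P)) := by
  rw [Wm_aeval, ← map_pow, aeval_entry]
  refine Finset.sum_congr rfl (fun k hk => ?_)
  rw [qpoly_pow_coeff r (Nat.lt_succ_iff.1 (Finset.mem_range.1 hk))]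

noncomputable def Gpoly : Polynomial ℚ :=
  ∑ k ∈ Finset.range (Fintype.card P + 1),
    Polynomial.C (((Nm P)^k) (dbot P) (dtop P))
      * (Polynomial.C ((k.factorial : ℚ)⁻¹) * descPochhammer ℚ k)

lemma binom_eval (k m : ℕ) :
    (Polynomial.C ((k.factorial : ℚ)⁻¹) * descPochhammer ℚ k).eval ((m:ℕ) : ℚ)
      = (m.choose k : ℚ) := by
  rw [Polynomial.eval_mul, Polynomial.eval_C, descPochhammer_eval_eq_descFactorial,
    Nat.descFactorial_eq_factorial_mul_choose]
  push_cast
  rw [← mul_assoc, inv_mul_cancel₀ (by exact_mod_cast k.factorial_ne_zero), one_mul]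

lemma binom_eval_neg (k r : ℕ) :
    (Polynomial.C ((k.factorial : ℚ)⁻¹) * descPochhammer ℚ k).eval (-(((r+1:ℕ)) : ℚ))
      = (-1:ℚ)^k * ((r+k).choose k : ℚ) := by
  have h1 := ascPochhammer_eval_neg_eq_descPochhammer (R := ℚ) (-(((r+1:ℕ)) : ℚ)) k
  rw [neg_neg] at h1
  have h2 : (descPochhammer ℚ k).eval (-(((r+1:ℕ)) : ℚ))
      = (-1:ℚ)^k * (ascPochhammer ℚ k).eval (((r+1:ℕ)) : ℚ) := by
    rw [h1, ← mul_assoc, ← pow_add]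
    rw [Even.neg_one_pow ⟨k, by ring⟩, one_mul]
  have h3 : (ascPochhammer ℚ k).eval (((r+1:ℕ)) : ℚ)
      = (((r+1).ascFactorial k : ℕ) : ℚ) := by
    rw [← ascPochhammer_eval_cast, ascPochhammer_nat_eq_ascFactorial]
  rw [Polynomial.eval_mul, Polynomial.eval_C, h2, h3,
    Nat.ascFactorial_eq_factorial_mul_choose]
  push_cast
  field_simp

lemma Gpoly_eval_nat (m : ℕ) :
    (Gpoly P).eval ((m : ℕ) : ℚ) = ((Zm P)^m) (dbot P) (dtop P) := by
  rw [Gpoly, Polynomial.eval_finset_sum, Zm_pow_entry]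
  refine Finset.sum_congr rfl (fun k _ => ?_)
  rw [Polynomial.eval_mul, Polynomial.eval_C, binom_eval, mul_comm]

lemma Gpoly_eval_neg (r : ℕ) :
    (Gpoly P).eval (-(((r+1:ℕ)) : ℚ)) = ((Wm P)^(r+1)) (dbot P) (dtop P) := by
  rw [Gpoly, Polynomial.eval_finset_sum, Wm_pow_entry]
  refine Finset.sum_congr rfl (fun k _ => ?_)
  rw [Polynomial.eval_mul, Polynomial.eval_C, binom_eval_neg, mul_comm]

end MatrixAlg


section Paths

variable {ι : Type*} [Fintype ι] [DecidableEq ι]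

lemma pow_apply_path (A : Matrix ι ι ℚ) (m : ℕ) (a b : ι) :
    (A ^ m) a b = ∑ c : Fin (m+1) → ι,
      (if c 0 = a ∧ c (Fin.last m) = b
       then ∏ j : Fin m, A (c j.castSucc) (c j.succ) else 0) := by
  induction m generalizing b with
  | zero =>
    rw [pow_zero]
    have h0 : (1 : Matrix ι ι ℚ) a b = ∑ d : ι, (if d = a ∧ d = b then 1 else 0) := by
      by_cases hab : a = b
      · subst hab
        rw [Matrix.one_apply_eq]
        simp only [and_self]
        rw [Finset.sum_ite_eq' Finset.univ a (fun _ => (1:ℚ)), if_pos (Finset.mem_univ a)]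
      · rw [Matrix.one_apply_ne (fun h => hab h), Finset.sum_eq_zero]
        intro d _
        rw [if_neg]
        rintro ⟨rfl, rfl⟩
        exact hab rfl
    rw [h0]
    refine Fintype.sum_equiv (Equiv.funUnique (Fin 1) ι).symm _ _ (fun d => ?_)
    have h1 : ((Equiv.funUnique (Fin 1) ι).symm d) 0 = d := rfl
    have h2 : ((Equiv.funUnique (Fin 1) ι).symm d) (Fin.last 0) = d := rfl
    rw [h1, h2]
    by_cases hd : d = a ∧ d = b
    · rw [if_pos hd, if_pos hd]
      simp
    · rw [if_neg hd, if_neg hd]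
  | succ m ih =>
    rw [pow_succ, Matrix.mul_apply]
    have hL : ∑ d : ι, (A^m) a d * A d b
        = ∑ c : Fin (m+1) → ι, (if c 0 = a
            then (∏ j : Fin m, A (c j.castSucc) (c j.succ)) * A (c (Fin.last m)) b
            else 0) := by
      have h1 : ∀ d : ι, (A^m) a d * A d b
          = ∑ c : Fin (m+1) → ι, (if c 0 = a ∧ c (Fin.last m) = d
              then (∏ j : Fin m, A (c j.castSucc) (c j.succ)) * A d b else 0) := by
        intro d
        rw [ih d, Finset.sum_mul]
        refine Finset.sum_congr rfl (fun c _ => ?_)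
        rw [ite_mul, zero_mul]
      rw [Finset.sum_congr rfl (fun d _ => h1 d), Finset.sum_comm]
      refine Finset.sum_congr rfl (fun c _ => ?_)
      by_cases hc : c 0 = a
      · rw [if_pos hc]
        have h2 : ∀ d : ι, (if c 0 = a ∧ c (Fin.last m) = d
            then (∏ j : Fin m, A (c j.castSucc) (c j.succ)) * A d b else 0)
            = (if c (Fin.last m) = d
            then (∏ j : Fin m, A (c j.castSucc) (c j.succ)) * A d b else 0) := by
          intro d
          by_cases hd : c (Fin.last m) = d
          · rw [if_pos ⟨hc, hd⟩, if_pos hd]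
          · rw [if_neg (fun hh => hd hh.2), if_neg hd]
        rw [Finset.sum_congr rfl (fun d _ => h2 d)]
        rw [Finset.sum_ite_eq Finset.univ (c (Fin.last m))
          (fun d => (∏ j : Fin m, A (c j.castSucc) (c j.succ)) * A d b)]
        rw [if_pos (Finset.mem_univ _)]
      · rw [if_neg hc, Finset.sum_eq_zero]
        intro d _
        rw [if_neg (fun hh => hc hh.1)]
    rw [hL]
    let e : ((Fin (m+1) → ι) × ι) ≃ (Fin (m+2) → ι) :=
      { toFun := fun p => Fin.snoc p.1 p.2
        invFun := fun c => (fun j => c j.castSucc, c (Fin.last (m+1)))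
        left_inv := fun p => by
          refine Prod.ext ?_ ?_
          · funext j
            simp
          · simp
        right_inv := fun c => by
          funext j
          refine Fin.lastCases ?_ (fun i => ?_) j <;> simp }
    rw [← Equiv.sum_comp e (fun c : Fin (m+2) → ι =>
      if c 0 = a ∧ c (Fin.last (m+1)) = b
      then ∏ j : Fin (m+1), A (c j.castSucc) (c j.succ) else 0)]
    rw [Fintype.sum_prod_type]
    refine Finset.sum_congr rfl (fun c _ => ?_)
    have hsnoc0 : ∀ d : ι, (Fin.snoc c d : Fin (m+2) → ι) 0 = c 0 := by
      intro d
      rw [show (0 : Fin (m+2)) = (0 : Fin (m+1)).castSucc by rw [Fin.castSucc_zero]]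
      rw [Fin.snoc_castSucc]
    have hsnocl : ∀ d : ι, (Fin.snoc c d : Fin (m+2) → ι) (Fin.last (m+1)) = d :=
      fun d => by rw [Fin.snoc_last]
    have hprod : ∀ d : ι,
        (∏ j : Fin (m+1), A ((Fin.snoc c d : Fin (m+2) → ι) j.castSucc)
          ((Fin.snoc c d : Fin (m+2) → ι) j.succ))
        = (∏ j : Fin m, A (c j.castSucc) (c j.succ)) * A (c (Fin.last m)) d := by
      intro d
      rw [Fin.prod_univ_castSucc (fun j : Fin (m+1) =>
        A ((Fin.snoc c d : Fin (m+2) → ι) j.castSucc) ((Fin.snoc c d : Fin (m+2) → ι) j.succ))]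
      congr 1
      · refine Finset.prod_congr rfl (fun i _ => ?_)
        rw [Fin.snoc_castSucc, Fin.succ_castSucc, Fin.snoc_castSucc]
      · rw [Fin.snoc_castSucc, Fin.succ_last, Fin.snoc_last]
    have heq : ∀ d : ι, (if (Fin.snoc c d : Fin (m+2) → ι) 0 = a
          ∧ (Fin.snoc c d : Fin (m+2) → ι) (Fin.last (m+1)) = b
        then ∏ j : Fin (m+1), A ((Fin.snoc c d : Fin (m+2) → ι) j.castSucc)
          ((Fin.snoc c d : Fin (m+2) → ι) j.succ) else 0)
        = (if c 0 = a ∧ d = b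
           then (∏ j : Fin m, A (c j.castSucc) (c j.succ)) * A (c (Fin.last m)) d else 0) := by
      intro d
      rw [hsnoc0, hsnocl]
      by_cases hd : c 0 = a ∧ d = b
      · rw [if_pos hd, if_pos hd, hprod]
      · rw [if_neg hd, if_neg hd]
    have : ∀ d : ι, (e (c, d)) = Fin.snoc c d := fun d => rfl
    rw [Finset.sum_congr rfl (fun d _ => by rw [this d, heq d])]
    by_cases hc : c 0 = a
    · have h3 : ∀ d : ι, (if c 0 = a ∧ d = b
          then (∏ j : Fin m, A (c j.castSucc) (c j.succ)) * A (c (Fin.last m)) d else 0)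
          = (if d = b
          then (∏ j : Fin m, A (c j.castSucc) (c j.succ)) * A (c (Fin.last m)) d else 0) := by
        intro d
        by_cases hd : d = b
        · rw [if_pos ⟨hc, hd⟩, if_pos hd]
        · rw [if_neg (fun hh => hd hh.2), if_neg hd]
      rw [Finset.sum_congr rfl (fun d _ => h3 d), if_pos hc]
      rw [Finset.sum_ite_eq' Finset.univ b
        (fun d => (∏ j : Fin m, A (c j.castSucc) (c j.succ)) * A (c (Fin.last m)) d)]
      rw [if_pos (Finset.mem_univ _)]
    · rw [if_neg hc, Finset.sum_eq_zero]
      intro d _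
      rw [if_neg (fun hh => hc hh.1)]

end Paths


lemma card_filter_val_lt {n v : ℕ} (h : v ≤ n) :
    (Finset.univ.filter (fun j : Fin (n+1) => (j:ℕ) < v)).card = v := by
  classical
  have heq : Finset.univ.filter (fun j : Fin (n+1) => (j:ℕ) < v)
      = Finset.Iio (⟨v, by omega⟩ : Fin (n+1)) := by
    ext j
    simp [Fin.lt_def]
  rw [heq, Fin.card_Iio]

lemma fin_downset_mem {n : ℕ} (S : Finset (Fin n))
    (hS : ∀ ⦃i j : Fin n⦄, i ≤ j → j ∈ S → i ∈ S) (j : Fin n) :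
    j ∈ S ↔ (j : ℕ) < S.card := by
  constructor
  · intro hj
    have h1 : Finset.Iic j ⊆ S := fun i hi => hS (Finset.mem_Iic.1 hi) hj
    have h2 := Finset.card_le_card h1
    rw [Fin.card_Iic] at h2
    omega
  · intro hj
    by_contra hn
    have h1 : S ⊆ Finset.Iio j := by
      intro i hi
      rw [Finset.mem_Iio]
      by_contra hij
      exact hn (hS (le_of_not_gt hij) hi)
    have h2 := Finset.card_le_card h1
    rw [Fin.card_Iio] at h2
    omega

section Comb

variable {P : Type*} [Fintype P] [PartialOrder P] [DecidableEq P]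

/-- the endpoint/step condition for order-preserving paths -/
def QZ (m : ℕ) (c : Fin (m+1) → Dn P) : Prop :=
  c 0 = dbot P ∧ c (Fin.last m) = dtop P ∧ ∀ j : Fin m, (c j.castSucc).1 ⊆ (c j.succ).1

open Classical in
noncomputable def pathOf (m : ℕ) (σ : P → Fin m) (hσ : Monotone σ) : Fin (m+1) → Dn P :=
  fun j => ⟨Finset.univ.filter (fun p => (σ p : ℕ) < (j:ℕ)), by
    intro a b hab hb
    simp only [Finset.mem_filter, Finset.mem_univ, true_and] at hb ⊢
    exact lt_of_le_of_lt (by exact_mod_cast hσ hab) hb⟩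

lemma pathOf_spec (m : ℕ) (σ : P → Fin m) (hσ : Monotone σ) : QZ m (pathOf m σ hσ) := by
  refine ⟨?_, ?_, ?_⟩
  · apply Subtype.ext
    apply Finset.eq_empty_of_forall_notMem
    intro p hp
    simp only [pathOf, Finset.mem_filter, Finset.mem_univ, true_and, Fin.val_zero] at hp
    simp at hp
  · apply Subtype.ext
    apply Finset.eq_univ_of_forall
    intro p
    simp only [pathOf, Finset.mem_filter, Finset.mem_univ, true_and, Fin.val_last]
    exact (σ p).isLt
  · intro j p hp
    simp only [pathOf, Finset.mem_filter, Finset.mem_univ, true_and,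
      Fin.coe_castSucc, Fin.val_succ] at hp ⊢
    omega

open Classical in
lemma Tcard_bounds (m : ℕ) (c : Fin (m+1) → Dn P) (hc : QZ m c) (p : P) :
    1 ≤ (Finset.univ.filter (fun j : Fin (m+1) => p ∉ (c j).1)).card ∧
      (Finset.univ.filter (fun j : Fin (m+1) => p ∉ (c j).1)).card ≤ m := by
  obtain ⟨h0, hl, _⟩ := hc
  constructor
  · apply Finset.card_pos.2
    refine ⟨0, Finset.mem_filter.2 ⟨Finset.mem_univ _, ?_⟩⟩
    rw [h0]
    simp [dbot]
  · have hsub : (Finset.univ.filter (fun j : Fin (m+1) => p ∉ (c j).1))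
        ⊆ Finset.univ.erase (Fin.last m) := by
      intro j hj
      rw [Finset.mem_erase]
      refine ⟨?_, Finset.mem_univ _⟩
      rintro rfl
      have := (Finset.mem_filter.1 hj).2
      rw [hl] at this
      exact this (by simp [dtop])
    have := Finset.card_le_card hsub
    rw [Finset.card_erase_of_mem (Finset.mem_univ _), Finset.card_univ, Fintype.card_fin] at this
    omega

lemma path_mono (m : ℕ) (c : Fin (m+1) → Dn P) (hsteps : ∀ j : Fin m, (c j.castSucc).1 ⊆ (c j.succ).1)
    {i j : Fin (m+1)} (hij : i ≤ j) : (c i).1 ⊆ (c j).1 := by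
  have : Monotone (fun j => (c j).1) := Fin.monotone_iff_le_succ.2 (fun i => hsteps i)
  exact this hij

open Classical in
noncomputable def mapOf (m : ℕ) (c : Fin (m+1) → Dn P) (hc : QZ m c) : P → Fin m :=
  fun p => ⟨(Finset.univ.filter (fun j : Fin (m+1) => p ∉ (c j).1)).card - 1, by
    obtain ⟨h1, h2⟩ := Tcard_bounds m c hc p
    omega⟩

open Classical in
lemma mapOf_mem_iff (m : ℕ) (c : Fin (m+1) → Dn P) (hc : QZ m c) (p : P) (j : Fin (m+1)) :
    p ∈ (c j).1 ↔ ((mapOf m c hc p : ℕ) < (j : ℕ)) := by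
  have hdown : ∀ ⦃i j' : Fin (m+1)⦄, i ≤ j' →
      j' ∈ (Finset.univ.filter (fun j : Fin (m+1) => p ∉ (c j).1)) →
      i ∈ (Finset.univ.filter (fun j : Fin (m+1) => p ∉ (c j).1)) := by
    intro i j' hij hj'
    rw [Finset.mem_filter] at hj' ⊢
    refine ⟨Finset.mem_univ _, fun hmem => hj'.2 (path_mono m c hc.2.2 hij hmem)⟩
  have h1 := fin_downset_mem _ hdown j
  rw [Finset.mem_filter] at h1
  obtain ⟨hb1, _⟩ := Tcard_bounds m c hc p
  simp only [Finset.mem_univ, true_and] at h1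
  constructor
  · intro hp
    have : ¬ ((j:ℕ) < (Finset.univ.filter (fun j : Fin (m+1) => p ∉ (c j).1)).card) :=
      fun hh => (h1.2 hh) hp
    simp only [mapOf]
    omega
  · intro hlt
    by_contra hp
    have := h1.1 hp
    simp only [mapOf] at hlt
    omega

lemma mapOf_mono (m : ℕ) (c : Fin (m+1) → Dn P) (hc : QZ m c) : Monotone (mapOf m c hc) := by
  intro p q hpq
  rw [Fin.le_def]
  simp only [mapOf]
  have hsub : (Finset.univ.filter (fun j : Fin (m+1) => p ∉ (c j).1))
      ⊆ (Finset.univ.filter (fun j : Fin (m+1) => q ∉ (c j).1)) := by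
    intro j hj
    rw [Finset.mem_filter] at hj ⊢
    exact ⟨Finset.mem_univ _, fun hq => hj.2 ((c j).2 hpq hq)⟩
  have := Finset.card_le_card hsub
  omega

lemma mapOf_pathOf (m : ℕ) (σ : P → Fin m) (hσ : Monotone σ) :
    mapOf m (pathOf m σ hσ) (pathOf_spec m σ hσ) = σ := by
  funext p
  apply Fin.ext
  simp only [mapOf]
  have heq : (Finset.univ.filter (fun j : Fin (m+1) => p ∉ ((pathOf m σ hσ) j).1))
      = Finset.univ.filter (fun j : Fin (m+1) => (j:ℕ) < (σ p : ℕ) + 1) := by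
    ext j
    simp only [Finset.mem_filter, Finset.mem_univ, true_and, pathOf]
    omega
  rw [heq, card_filter_val_lt (by have := (σ p).isLt; omega)]
  omega

lemma pathOf_mapOf (m : ℕ) (c : Fin (m+1) → Dn P) (hc : QZ m c) :
    pathOf m (mapOf m c hc) (mapOf_mono m c hc) = c := by
  funext j
  apply Subtype.ext
  ext p
  simp only [pathOf, Finset.mem_filter, Finset.mem_univ, true_and]
  exact (mapOf_mem_iff m c hc p j).symm

lemma pathOf_diff (m : ℕ) (σ : P → Fin m) (hσ : Monotone σ) (j : Fin m) :
    ((pathOf m σ hσ) j.succ).1 \ ((pathOf m σ hσ) j.castSucc).1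
      = Finset.univ.filter (fun p => σ p = j) := by
  ext p
  simp only [Finset.mem_sdiff, Finset.mem_filter, Finset.mem_univ, true_and, pathOf,
    Fin.coe_castSucc, Fin.val_succ]
  rw [Fin.ext_iff]
  omega

lemma strict_iff_antichain (m : ℕ) (σ : P → Fin m) (hσ : Monotone σ) :
    (∀ u v : P, u < v → σ u < σ v)
      ↔ ∀ j : Fin m, IsAntichain (· ≤ ·)
          ((Finset.univ.filter (fun p => σ p = j) : Finset P) : Set P) := by
  constructor
  · intro hstrict j u hu v hv hne hle
    rw [Finset.mem_coe, Finset.mem_filter] at hu hv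
    have : u < v := lt_of_le_of_ne hle hne
    have := hstrict u v this
    rw [hu.2, hv.2] at this
    exact lt_irrefl _ this
  · intro hanti u v huv
    have hle : σ u ≤ σ v := hσ huv.le
    rcases lt_or_eq_of_le hle with h | h
    · exact h
    · exfalso
      refine hanti (σ v) (Finset.mem_coe.2 (Finset.mem_filter.2 ⟨Finset.mem_univ _, h⟩))
        (Finset.mem_coe.2 (Finset.mem_filter.2 ⟨Finset.mem_univ _, rfl⟩))
        (fun he => ?_) huv.le
      exact (ne_of_lt huv) he
  
lemma teles0 : ∀ (m : ℕ) (f : Fin (m+1) → Finset P),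
    (∀ j : Fin m, f j.castSucc ⊆ f j.succ) →
    (f 0).card + ∑ j : Fin m, (f j.succ \ f j.castSucc).card = (f (Fin.last m)).card := by
  intro m
  induction m with
  | zero =>
    intro f _
    simp [show Fin.last 0 = 0 from rfl]
  | succ m ih =>
    intro f hf
    rw [Fin.sum_univ_castSucc (fun j : Fin (m+1) => (f j.succ \ f j.castSucc).card)]
    have h1 := ih (fun j : Fin (m+1) => f j.castSucc) (fun j => by
      have h2 := hf j.castSucc
      rwa [Fin.succ_castSucc] at h2)
    rw [Fin.castSucc_zero] at h1
    have h3 : ∀ j : Fin m, f (j.castSucc).succ \ f (j.castSucc).castSucc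
        = f (j.succ.castSucc) \ f (j.castSucc.castSucc) := by
      intro j
      rw [Fin.succ_castSucc]
    have h4 : (f ((Fin.last m).succ) \ f ((Fin.last m).castSucc)).card
        + (f ((Fin.last m).castSucc)).card = (f ((Fin.last m).succ)).card :=
      Finset.card_sdiff_add_card_eq_card (hf (Fin.last m))
    rw [show (Fin.last (m+1)) = (Fin.last m).succ from (Fin.succ_last m).symm]
    have h5 : ∑ j : Fin m, (f (j.castSucc.succ) \ f (j.castSucc.castSucc)).card
        = ∑ j : Fin m, (f (j.succ.castSucc) \ f (j.castSucc.castSucc)).card :=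
      Finset.sum_congr rfl (fun j _ => by rw [h3 j])
    omega

lemma teles (m : ℕ) (c : Fin (m+1) → Dn P) (hc : QZ m c) :
    ∑ j : Fin m, (((c j.succ).1 \ (c j.castSucc).1).card) = Fintype.card P := by
  have := teles0 m (fun j => (c j).1) (fun j => hc.2.2 j)
  rw [hc.1, hc.2.1] at this
  simp only [dbot, dtop, Finset.card_empty, Finset.card_univ, zero_add] at this
  exact this


lemma mono_of_strict {m : ℕ} {σ : P → Fin m} (h : ∀ u v : P, u < v → σ u < σ v) :
    Monotone σ := by
  intro u v huv
  rcases eq_or_lt_of_le huv with rfl | hlt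
  · exact le_refl _
  · exact (h u v hlt).le

lemma Zm_pow_count (m : ℕ) :
    ((Zm P)^m) (dbot P) (dtop P) = (Nat.card {σ : P → Fin m // Monotone σ} : ℚ) := by
  classical
  rw [pow_apply_path]
  have hsummand : ∀ c : Fin (m+1) → Dn P,
      (if c 0 = dbot P ∧ c (Fin.last m) = dtop P
       then ∏ j : Fin m, Zm P (c j.castSucc) (c j.succ) else 0)
      = if QZ m c then (1:ℚ) else 0 := by
    intro c
    by_cases hend : c 0 = dbot P ∧ c (Fin.last m) = dtop P
    · rw [if_pos hend]
      by_cases hst : ∀ j : Fin m, (c j.castSucc).1 ⊆ (c j.succ).1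
      · rw [if_pos ⟨hend.1, hend.2, hst⟩, Finset.prod_eq_one]
        intro j _
        simp [Zm, hst j]
      · obtain ⟨j, hj⟩ := not_forall.1 hst
        rw [if_neg (fun hq : QZ m c => hj (hq.2.2 j))]
        exact Finset.prod_eq_zero (Finset.mem_univ j) (by simp [Zm, hj])
    · rw [if_neg hend, if_neg (fun hq : QZ m c => hend ⟨hq.1, hq.2.1⟩)]
  rw [Finset.sum_congr rfl (fun c _ => hsummand c), Finset.sum_boole]
  congr 1
  rw [← Fintype.card_subtype, Nat.card_eq_fintype_card]
  apply Fintype.card_congr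
  exact ⟨fun c => ⟨mapOf m c.1 c.2, mapOf_mono m c.1 c.2⟩,
         fun s => ⟨pathOf m s.1 s.2, pathOf_spec m s.1 s.2⟩,
         fun c => Subtype.ext (pathOf_mapOf m c.1 c.2),
         fun s => Subtype.ext (mapOf_pathOf m s.1 s.2)⟩

lemma Wm_pow_count (m : ℕ) :
    ((Wm P)^m) (dbot P) (dtop P)
      = (-1:ℚ)^(Fintype.card P)
        * (Nat.card {σ : P → Fin m // ∀ u v : P, u < v → σ u < σ v} : ℚ) := by
  classical
  rw [pow_apply_path]
  set QW : (Fin (m+1) → Dn P) → Prop := fun c => QZ m c ∧ ∀ j : Fin m,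
    IsAntichain (· ≤ ·) (((c j.succ).1 \ (c j.castSucc).1 : Finset P) : Set P) with hQW
  have hsummand : ∀ c, (if c 0 = dbot P ∧ c (Fin.last m) = dtop P
      then ∏ j : Fin m, Wm P (c j.castSucc) (c j.succ) else 0)
      = if QW c then (-1:ℚ)^(Fintype.card P) else 0 := by
    intro c
    by_cases hend : c 0 = dbot P ∧ c (Fin.last m) = dtop P
    · rw [if_pos hend]
      by_cases hgood : ∀ j : Fin m, (c j.castSucc).1 ⊆ (c j.succ).1
          ∧ IsAntichain (· ≤ ·) (((c j.succ).1 \ (c j.castSucc).1 : Finset P) : Set P)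
      · have hQ : QW c := ⟨⟨hend.1, hend.2, fun j => (hgood j).1⟩, fun j => (hgood j).2⟩
        rw [if_pos hQ]
        have hfact : ∀ j : Fin m, Wm P (c j.castSucc) (c j.succ)
            = (-1:ℚ)^(((c j.succ).1 \ (c j.castSucc).1).card) := by
          intro j
          simp only [Wm]
          rw [if_pos (hgood j)]
        rw [Finset.prod_congr rfl (fun j _ => hfact j), Finset.prod_pow_eq_pow_sum]
        rw [teles m c ⟨hend.1, hend.2, fun j => (hgood j).1⟩]
      · obtain ⟨j, hj⟩ := not_forall.1 hgood
        rw [if_neg (fun hq : QW c => hj ⟨hq.1.2.2 j, hq.2 j⟩)]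
        refine Finset.prod_eq_zero (Finset.mem_univ j) ?_
        simp only [Wm]
        rw [if_neg hj]
    · rw [if_neg hend, if_neg (fun hq : QW c => hend ⟨hq.1.1, hq.1.2.1⟩)]
  rw [Finset.sum_congr rfl (fun c _ => hsummand c), ← Finset.sum_filter,
    Finset.sum_const, nsmul_eq_mul, mul_comm]
  congr 1
  congr 1
  rw [← Fintype.card_subtype, Nat.card_eq_fintype_card]
  apply Fintype.card_congr
  refine ⟨fun c => ⟨mapOf m c.1 c.2.1, ?_⟩,
         fun s => ⟨pathOf m s.1 (mono_of_strict s.2),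
           ⟨pathOf_spec m s.1 (mono_of_strict s.2), fun j => ?_⟩⟩,
         fun c => Subtype.ext (pathOf_mapOf m c.1 c.2.1),
         fun s => Subtype.ext (mapOf_pathOf m s.1 (mono_of_strict s.2))⟩
  · apply (strict_iff_antichain m _ (mapOf_mono m c.1 c.2.1)).2
    intro j
    have hd : (Finset.univ.filter (fun p => mapOf m c.1 c.2.1 p = j))
        = ((c.1 j.succ).1 \ (c.1 j.castSucc).1) := by
      rw [← pathOf_diff m (mapOf m c.1 c.2.1) (mapOf_mono m c.1 c.2.1) j,
        pathOf_mapOf m c.1 c.2.1]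
    rw [hd]
    exact c.2.2 j
  · rw [pathOf_diff]
    exact (strict_iff_antichain m s.1 (mono_of_strict s.2)).1 s.2 j

end Comb

end StanleyRec

/-- Stanley reciprocity: let `P` be a finite poset on `n`
elements, and let `O`, `Obar` be the order polynomial and strict order
polynomial of `P`, i.e. polynomials whose values at each positive integer `m`
count the order-preserving (resp. strictly order-preserving) maps `P → [m]`.
Then `Ω̄(P, x) = (-1)^n Ω(P, -x)` as an identity of polynomials. -/
theorem strict_order_poly_reciprocity {P : Type*} [Fintype P] [PartialOrder P]
    {n : ℕ} (hn : Fintype.card P = n)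
    (O Obar : Polynomial ℚ)
    (hO : ∀ m : ℕ, 0 < m →
      O.eval (m : ℚ) = Nat.card {σ : P → Fin m // Monotone σ})
    (hObar : ∀ m : ℕ, 0 < m →
      Obar.eval (m : ℚ) =
        Nat.card {σ : P → Fin m // ∀ u v : P, u < v → σ u < σ v}) :
    ∀ x : ℚ, Obar.eval x = (-1) ^ n * O.eval (-x) := by
  classical
  subst hn
  letI : DecidableEq P := Classical.decEq P
  set n := Fintype.card P with hnn
  have hinj : Function.Injective (fun m : ℕ => (((m+1:ℕ)) : ℚ)) := by
    intro a b hab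
    have h := Nat.cast_injective (R := ℚ) hab
    omega
  have hOG : O = StanleyRec.Gpoly P := by
    apply Polynomial.eq_of_infinite_eval_eq
    apply Set.infinite_of_injective_forall_mem hinj
    intro m
    simp only [Set.mem_setOf_eq]
    rw [hO (m+1) (Nat.succ_pos m), StanleyRec.Gpoly_eval_nat P (m+1), StanleyRec.Zm_pow_count (m+1)]
  have hpoly : Obar = Polynomial.C ((-1:ℚ)^n) * (O.comp (-Polynomial.X)) := by
    apply Polynomial.eq_of_infinite_eval_eq
    apply Set.infinite_of_injective_forall_mem hinj
    intro r
    simp only [Set.mem_setOf_eq]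
    rw [Polynomial.eval_mul, Polynomial.eval_C, Polynomial.eval_comp,
      Polynomial.eval_neg, Polynomial.eval_X]
    rw [hObar (r+1) (Nat.succ_pos r), hOG, StanleyRec.Gpoly_eval_neg P r, StanleyRec.Wm_pow_count (r+1)]
    rw [← mul_assoc, ← pow_add, Even.neg_one_pow ⟨n, by ring⟩, one_mul]
  intro x
  rw [hpoly, Polynomial.eval_mul, Polynomial.eval_C, Polynomial.eval_comp,
    Polynomial.eval_neg, Polynomial.eval_X]
end

section
/- Let D = ([n], A) be an acyclic digraph such that every arc (a, b) ∈ A satisfies a < b. Then Ω(D̄, x) = Σ_{π ∈ OP(D)} C(x + δ_D(π), n), where the sum runs over all D-respecting orderings π of [n]. -/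
open Classical in
/-- `δ_D(π)`: the number of indices `i ≤ n-2` with `π i < π (i+1)` or
`(π i, π (i+1))` an arc of `D`. -/
noncomputable def deltaOrd {V : Type*} [LinearOrder V] (A : V → V → Prop)
    {n : ℕ} (π : Fin n → V) : ℕ :=
  ((Finset.range (n - 1)).filter (fun i =>
    ∃ h : i + 1 < n, π ⟨i, Nat.lt_of_succ_lt h⟩ < π ⟨i + 1, h⟩ ∨
      A (π ⟨i, Nat.lt_of_succ_lt h⟩) (π ⟨i + 1, h⟩))).card

/-- An ordering `π` of the vertices is `D`-respecting if `(π i, π j)` an arc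
implies `i < j`. -/
def DRespects {V : Type*} (A : V → V → Prop) {n : ℕ} (π : Fin n → V) : Prop :=
  ∀ i j : Fin n, A (π i) (π j) → i < j

/-- The value at the positive integer `m` of the order polynomial of the
poset `D̄`, the reflexive transitive closure of the digraph `D`: the number of
maps `σ : V → [m]` preserving the reflexive transitive closure of `A`. -/
noncomputable def orderPolyAt {V : Type*} (A : V → V → Prop) (m : ℕ) : ℕ :=
  Nat.card {σ : V → Fin m // ∀ u v : V, Relation.ReflTransGen A u v → σ u ≤ σ v}

open Classical in
/-- `Ψ(D, m) = Σ_{π ∈ OP(D)} C(m + δ_D(π), n)` for a digraph `D` on `[n]`. -/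
noncomputable def PsiAt {n : ℕ} (A : Fin n → Fin n → Prop) (m : ℕ) : ℕ :=
  ∑ π ∈ Finset.univ.filter
      (fun π : Equiv.Perm (Fin n) => DRespects A (fun i => π i)),
    (m + deltaOrd A (fun i => π i)).choose n

/-- `W(D) = ∅`: there is no triple `a < b < c` with `(c, a) ∈ A`,
`a ≉_D b` and `c ≉_D b`. -/
def WEmpty {V : Type*} [LinearOrder V] (A : V → V → Prop) : Prop :=
  ¬ ∃ a b c : V, a < b ∧ b < c ∧ A c a ∧
    ¬ Relation.TransGen A a b ∧ ¬ Relation.TransGen A b a ∧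
    ¬ Relation.TransGen A b c ∧ ¬ Relation.TransGen A c b


open Finset in
lemma card_strictMono_maps (n k : ℕ) :
    Nat.card {f : Fin n → Fin k // StrictMono f} = k.choose n := by
  have e : {f : Fin n → Fin k // StrictMono f} ≃ {s : Finset (Fin k) // s.card = n} :=
  { toFun := fun f => ⟨Finset.univ.image f.1, by
      rw [Finset.card_image_of_injective _ f.2.injective, Finset.card_univ, Fintype.card_fin]⟩
    invFun := fun s => ⟨s.1.orderEmbOfFin s.2, (s.1.orderEmbOfFin s.2).strictMono⟩
    left_inv := fun f => by
      apply Subtype.ext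
      exact (Finset.orderEmbOfFin_unique _ (fun x => Finset.mem_image_of_mem _ (mem_univ x))
        f.2).symm
    right_inv := fun s => by
      apply Subtype.ext
      have := Finset.range_orderEmbOfFin s.1 s.2
      apply Finset.coe_injective
      rw [coe_image, coe_univ, Set.image_univ, this] }
  rw [Nat.card_congr e, Nat.card_eq_fintype_card, Fintype.card_subtype,
    ← Finset.powerset_univ, ← Finset.powersetCard_eq_filter, Finset.card_powersetCard,
    Finset.card_univ, Fintype.card_fin]

lemma fin_monotone_of_succ {α : Type*} [Preorder α] {n : ℕ} {f : Fin n → α}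
    (h : ∀ i : ℕ, ∀ hi : i + 1 < n, f ⟨i, Nat.lt_of_succ_lt hi⟩ ≤ f ⟨i + 1, hi⟩) :
    Monotone f := by
  have key : ∀ j : ℕ, ∀ hj : j < n, ∀ i : ℕ, ∀ hi : i < n, i ≤ j → f ⟨i, hi⟩ ≤ f ⟨j, hj⟩ := by
    intro j
    induction j with
    | zero => intro hj i hi hij; obtain rfl : i = 0 := Nat.le_zero.mp hij; rfl
    | succ j ih =>
      intro hj i hi hij
      rcases Nat.eq_or_lt_of_le hij with rfl | hlt
      · rfl
      · exact (ih (Nat.lt_of_succ_lt hj) i hi (Nat.lt_succ_iff.mp hlt)).trans (h j hj)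
  intro i j hij
  have := key j.val j.isLt i.val i.isLt hij
  simpa using this

lemma fin_strictMono_of_succ {α : Type*} [Preorder α] {n : ℕ} {f : Fin n → α}
    (h : ∀ i : ℕ, ∀ hi : i + 1 < n, f ⟨i, Nat.lt_of_succ_lt hi⟩ < f ⟨i + 1, hi⟩) :
    StrictMono f := by
  have key : ∀ j : ℕ, ∀ hj : j < n, ∀ i : ℕ, ∀ hi : i < n, i < j → f ⟨i, hi⟩ < f ⟨j, hj⟩ := by
    intro j
    induction j with
    | zero => intro hj i hi hij; omega
    | succ j ih =>
      intro hj i hi hij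
      rcases Nat.eq_or_lt_of_le (Nat.lt_succ_iff.mp hij) with rfl | hlt
      · exact h i hj
      · exact (ih (Nat.lt_of_succ_lt hj) i hi hlt).trans (h j hj)
  intro i j hij
  have := key j.val j.isLt i.val i.isLt hij
  simpa using this

open Classical in
lemma card_chains (n m : ℕ) (hm : 0 < m) (P : ℕ → Prop) :
    Nat.card {g : Fin n → Fin m //
      ∀ i : ℕ, ∀ h : i + 1 < n, g ⟨i, Nat.lt_of_succ_lt h⟩ ≤ g ⟨i + 1, h⟩ ∧
        (¬ P i → g ⟨i, Nat.lt_of_succ_lt h⟩ < g ⟨i + 1, h⟩)} =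
    (m + ((Finset.range (n - 1)).filter P).card).choose n := by
  classical
  set a := ((Finset.range (n - 1)).filter P).card with ha
  set c : ℕ → ℕ := fun i => ((Finset.range i).filter P).card with hc
  have hcmono : ∀ {i j : ℕ}, i ≤ j → c i ≤ c j := fun hij =>
    Finset.card_le_card (Finset.filter_subset_filter _ (Finset.range_subset_range.mpr hij))
  have hcsucc : ∀ i, c (i + 1) = c i + (if P i then 1 else 0) := by
    intro i
    simp only [hc, Finset.range_add_one, Finset.filter_insert]
    split <;> simp [Finset.card_insert_of_notMem, Finset.notMem_range_self]
  have hcle : ∀ i, c i ≤ i := fun i =>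
    (Finset.card_filter_le _ _).trans (by simp)
  have hca : ∀ i, i < n → c i ≤ a := fun i hi => hcmono (by omega)
  -- f j ≥ j for strict mono f
  have hge : ∀ {k : ℕ} (f : Fin n → Fin k), StrictMono f → ∀ i : ℕ, ∀ hi : i < n,
      i ≤ (f ⟨i, hi⟩).val := by
    intro k f hf i
    induction i with
    | zero => omega
    | succ i ih =>
      intro hi
      have h1 := ih (Nat.lt_of_succ_lt hi)
      have h2 : f ⟨i, Nat.lt_of_succ_lt hi⟩ < f ⟨i + 1, hi⟩ := hf (by simp [Fin.lt_def])
      have := Fin.lt_def.mp h2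
      omega
  have e : {g : Fin n → Fin m //
      ∀ i : ℕ, ∀ h : i + 1 < n, g ⟨i, Nat.lt_of_succ_lt h⟩ ≤ g ⟨i + 1, h⟩ ∧
        (¬ P i → g ⟨i, Nat.lt_of_succ_lt h⟩ < g ⟨i + 1, h⟩)} ≃
      {f : Fin n → Fin (m + a) // StrictMono f} := by
    refine
    { toFun := fun g => ⟨fun j => ⟨(g.1 j).val + c j.val, ?_⟩, ?_⟩
      invFun := fun f => ⟨fun j => ⟨(f.1 j).val - c j.val, ?_⟩, ?_⟩
      left_inv := ?_, right_inv := ?_ }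
    · have := (g.1 j).isLt
      have := hca j.val j.isLt
      omega
    · apply fin_strictMono_of_succ
      intro i hi
      have hcs := hcsucc i
      have hg := g.2 i hi
      simp only [Fin.mk_lt_mk]
      simp only [Fin.le_def, Fin.lt_def] at hg
      by_cases hP : P i
      · simp [hP] at hcs; have := hg.1; omega
      · simp [hP] at hcs; have := hg.2 hP; omega
    · -- f j - c j < m
      -- d is weakly monotone; compare with d (n-1)
      have hd : ∀ j : ℕ, ∀ hj : j < n, ∀ i : ℕ, ∀ hi : i < n, i ≤ j →
          (f.1 ⟨i, hi⟩).val - c i ≤ (f.1 ⟨j, hj⟩).val - c j := by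
        intro j
        induction j with
        | zero => intro hj i hi hij; obtain rfl : i = 0 := Nat.le_zero.mp hij; exact le_refl _
        | succ j ih =>
          intro hj i hi hij
          rcases Nat.eq_or_lt_of_le hij with rfl | hlt
          · exact le_refl _
          · refine (ih (Nat.lt_of_succ_lt hj) i hi (Nat.lt_succ_iff.mp hlt)).trans ?_
            have hstep : f.1 ⟨j, Nat.lt_of_succ_lt hj⟩ < f.1 ⟨j + 1, hj⟩ :=
              f.2 (by simp [Fin.lt_def])
            rw [Fin.lt_def] at hstep
            have e1 := hcsucc j
            have e2 := hge f.1 f.2 j (Nat.lt_of_succ_lt hj)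
            have e3 := hcle j
            split_ifs at e1 <;> omega
      have hn : 0 < n := j.pos
      have hlast : n - 1 < n := by omega
      have h1 := hd (n - 1) hlast j.val j.isLt (by omega)
      simp only [Fin.eta] at h1
      have h2 : c (n - 1) = a := rfl
      have h3 := (f.1 ⟨n - 1, hlast⟩).isLt
      omega
    · -- conditions for g = f - c
      intro i hi
      have hstep : f.1 ⟨i, Nat.lt_of_succ_lt hi⟩ < f.1 ⟨i + 1, hi⟩ := f.2 (by simp [Fin.lt_def])
      rw [Fin.lt_def] at hstep
      have hcs := hcsucc i
      have hgei := hge f.1 f.2 i (Nat.lt_of_succ_lt hi)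
      have hclei := hcle i
      constructor
      · simp only [Fin.mk_le_mk]; split_ifs at hcs <;> omega
      · intro hP
        simp only [Fin.mk_lt_mk]
        simp [hP] at hcs
        omega
    · intro g
      apply Subtype.ext
      funext j
      apply Fin.ext
      simp
    · intro f
      apply Subtype.ext
      funext j
      apply Fin.ext
      have hh := hge f.1 f.2 j.val j.isLt
      simp only [Fin.eta] at hh
      have := hcle j.val
      simp only []
      omega
  rw [Nat.card_congr e]
  exact card_strictMono_maps n (m + a) |>.trans rfl

section Main
variable {n m : ℕ} (A : Fin n → Fin n → Prop)
  (hinc : ∀ a b : Fin n, A a b → a < b)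

/-- abbreviation for the chain condition -/
def Cnd (π : Equiv.Perm (Fin n)) (g : Fin n → Fin m) : Prop :=
  ∀ i : ℕ, ∀ h : i + 1 < n,
    g ⟨i, Nat.lt_of_succ_lt h⟩ ≤ g ⟨i + 1, h⟩ ∧
    (¬ (∃ h' : i + 1 < n, π ⟨i, Nat.lt_of_succ_lt h'⟩ < π ⟨i + 1, h'⟩) →
      g ⟨i, Nat.lt_of_succ_lt h⟩ < g ⟨i + 1, h⟩)

def OP (σ : Fin n → Fin m) : Prop :=
  ∀ u v : Fin n, Relation.ReflTransGen A u v → σ u ≤ σ v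

include hinc in
lemma K1 (σ : Fin n → Fin m) (hσ : OP A σ) : DRespects A (fun i => Tuple.sort σ i) := by
  set π := Tuple.sort σ with hπ
  have hmono : Monotone (σ ∘ ⇑π) := Tuple.monotone_sort σ
  have hstab : ∀ i j, i < j → σ (π i) = σ (π j) → π i < π j := (Tuple.eq_sort_iff.mp hπ).2
  intro i j hA
  have hlt : π i < π j := hinc _ _ hA
  have hle : σ (π i) ≤ σ (π j) := hσ _ _ (Relation.ReflTransGen.single hA)
  by_contra hc
  rcases (not_lt.mp hc).lt_or_eq with hji | hji
  · have hle' : σ (π j) ≤ σ (π i) := hmono hji.le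
    exact absurd (hstab j i hji (le_antisymm hle' hle)) (asymm hlt)
  · rw [hji] at hlt; exact lt_irrefl _ hlt

lemma K2 (σ : Fin n → Fin m) : Cnd (Tuple.sort σ) (σ ∘ ⇑(Tuple.sort σ)) := by
  set π := Tuple.sort σ with hπ
  have hmono : Monotone (σ ∘ ⇑π) := Tuple.monotone_sort σ
  have hstab : ∀ i j, i < j → σ (π i) = σ (π j) → π i < π j := (Tuple.eq_sort_iff.mp hπ).2
  intro i hi
  have hij : (⟨i, Nat.lt_of_succ_lt hi⟩ : Fin n) < ⟨i + 1, hi⟩ := by simp [Fin.lt_def]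
  refine ⟨hmono hij.le, fun hP => ?_⟩
  rcases (hmono hij.le).lt_or_eq with h | h
  · exact h
  · exact absurd ⟨hi, hstab _ _ hij h⟩ hP

lemma K3 (π : Equiv.Perm (Fin n)) (σ : Fin n → Fin m)
    (hR : DRespects A (fun i => π i)) (hC : Cnd π (σ ∘ ⇑π)) :
    OP A σ ∧ Tuple.sort σ = π := by
  have hmono : Monotone (σ ∘ ⇑π) := fin_monotone_of_succ (fun i hi => (hC i hi).1)
  have hOP : OP A σ := by
    intro u v huv
    induction huv with
    | refl => exact le_refl _
    | tail _ hbc ih =>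
      rename_i b c _
      refine ih.trans ?_
      have hA : A (π (π.symm b)) (π (π.symm c)) := by simpa using hbc
      have hlt := hR _ _ hA
      have := hmono hlt.le
      simpa using this
  refine ⟨hOP, ?_⟩
  have hcons : ∀ k : ℕ, ∀ hk : k + 1 < n,
      σ (π ⟨k, Nat.lt_of_succ_lt hk⟩) = σ (π ⟨k + 1, hk⟩) →
      π ⟨k, Nat.lt_of_succ_lt hk⟩ < π ⟨k + 1, hk⟩ := by
    intro k hk heq
    by_contra hc
    have hlt : (σ ∘ ⇑π) ⟨k, Nat.lt_of_succ_lt hk⟩ < (σ ∘ ⇑π) ⟨k + 1, hk⟩ :=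
      (hC k hk).2 (fun hex => hc hex.2)
    exact absurd heq (ne_of_lt hlt)
  have hstab : ∀ j : ℕ, ∀ hj : j < n, ∀ i : ℕ, ∀ hi : i < n, i < j →
      σ (π ⟨i, hi⟩) = σ (π ⟨j, hj⟩) → π ⟨i, hi⟩ < π ⟨j, hj⟩ := by
    intro j
    induction j with
    | zero => intro hj i hi hij; omega
    | succ j ih =>
      intro hj i hi hij heq
      rcases Nat.eq_or_lt_of_le (Nat.lt_succ_iff.mp hij) with rfl | hlt
      · exact hcons i hj heq
      · have h1 : σ (π ⟨i, hi⟩) ≤ σ (π ⟨j, Nat.lt_of_succ_lt hj⟩) :=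
          hmono (by simp [Fin.le_def]; omega)
        have h2 : σ (π ⟨j, Nat.lt_of_succ_lt hj⟩) ≤ σ (π ⟨j + 1, hj⟩) :=
          hmono (by simp [Fin.le_def])
        have h3 : σ (π ⟨i, hi⟩) = σ (π ⟨j, Nat.lt_of_succ_lt hj⟩) :=
          le_antisymm h1 (heq ▸ h2)
        have h4 : σ (π ⟨j, Nat.lt_of_succ_lt hj⟩) = σ (π ⟨j + 1, hj⟩) :=
          le_antisymm h2 (h3 ▸ heq.symm.le)
        exact (ih (Nat.lt_of_succ_lt hj) i hi hlt h3).trans (hcons j hj h4)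
  refine (Tuple.eq_sort_iff.mpr ⟨hmono, ?_⟩).symm
  intro i j hij heq
  have := hstab j.val j.isLt i.val i.isLt hij heq
  simpa using this

end Main

open Classical in
/-- if `D = ([n], A)` is an acyclic digraph all of whose arcs
`(a, b)` satisfy `a < b`, then `Ω(D̄, x) = Σ_{π ∈ OP(D)} C(x + δ_D(π), n)`
(as an identity of polynomials, i.e. at every positive integer `x = m`). -/
theorem orderPoly_eq_Psi_of_increasing {n : ℕ} (A : Fin n → Fin n → Prop)
    (hacyc : ∀ v, ¬ Relation.TransGen A v v)
    (hinc : ∀ a b : Fin n, A a b → a < b) :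
    ∀ m : ℕ, 0 < m → orderPolyAt A m = PsiAt A m := by
  intro m hm
  classical
  have E : {σ : Fin n → Fin m // ∀ u v : Fin n, Relation.ReflTransGen A u v → σ u ≤ σ v} ≃
      Σ π : {π : Equiv.Perm (Fin n) // DRespects A (fun i => π i)},
        {g : Fin n → Fin m // Cnd π.1 g} := by
    refine
    { toFun := fun σ => ⟨⟨Tuple.sort σ.1, K1 A hinc σ.1 σ.2⟩,
        ⟨σ.1 ∘ ⇑(Tuple.sort σ.1), K2 σ.1⟩⟩
      invFun := fun x => ⟨x.2.1 ∘ ⇑(x.1.1⁻¹), ?_⟩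
      left_inv := ?_, right_inv := ?_ }
    · have hC : Cnd x.1.1 ((x.2.1 ∘ ⇑(x.1.1⁻¹)) ∘ ⇑(x.1.1)) := by
        have hgg : (x.2.1 ∘ ⇑(x.1.1⁻¹)) ∘ ⇑(x.1.1) = x.2.1 := by
          funext i; simp
        rw [hgg]; exact x.2.2
      exact (K3 A x.1.1 (x.2.1 ∘ ⇑(x.1.1⁻¹)) x.1.2 hC).1
    · intro σ
      apply Subtype.ext
      funext v
      simp
    · rintro ⟨⟨π, hπ⟩, ⟨g, hg⟩⟩
      have hC : Cnd π ((g ∘ ⇑(π⁻¹)) ∘ ⇑π) := by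
        have hgg : (g ∘ ⇑(π⁻¹)) ∘ ⇑π = g := by funext i; simp
        rw [hgg]; exact hg
      have hs : Tuple.sort (g ∘ ⇑(π⁻¹)) = π := (K3 A π (g ∘ ⇑(π⁻¹)) hπ hC).2
      refine Sigma.ext (Subtype.ext hs) ?_
      refine (Subtype.heq_iff_coe_eq ?_).mpr ?_
      · intro g'
        show Cnd (Tuple.sort (g ∘ ⇑(π⁻¹))) g' ↔ Cnd π g'
        rw [hs]
      · show (g ∘ ⇑(π⁻¹)) ∘ ⇑(Tuple.sort (g ∘ ⇑(π⁻¹))) = g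
        rw [hs]; funext i; simp
  have h1 : orderPolyAt A m =
      Nat.card (Σ π : {π : Equiv.Perm (Fin n) // DRespects A (fun i => π i)},
        {g : Fin n → Fin m // Cnd π.1 g}) := by
    rw [orderPolyAt]; exact Nat.card_congr E
  haveI F1 : Fintype {π : Equiv.Perm (Fin n) // DRespects A (fun i => π i)} :=
    Fintype.ofFinite _
  haveI F2 : ∀ π : {π : Equiv.Perm (Fin n) // DRespects A (fun i => π i)},
      Fintype {g : Fin n → Fin m // Cnd π.1 g} := fun _ => Fintype.ofFinite _
  rw [h1, Nat.card_eq_fintype_card, Fintype.card_sigma]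
  have hterm : ∀ π : {π : Equiv.Perm (Fin n) // DRespects A (fun i => π i)},
      Fintype.card {g : Fin n → Fin m // Cnd π.1 g} =
      (m + deltaOrd A (fun i => π.1 i)).choose n := by
    intro π
    rw [← Nat.card_eq_fintype_card]
    refine Eq.trans (card_chains n m hm (fun i => ∃ h' : i + 1 < n,
      π.1 ⟨i, Nat.lt_of_succ_lt h'⟩ < π.1 ⟨i + 1, h'⟩)) ?_
    congr 1
    rw [deltaOrd]
    congr 1
    apply congrArg
    ext i
    simp only [Finset.mem_filter, and_congr_right_iff]
    intro _
    constructor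
    · rintro ⟨h, hlt⟩; exact ⟨h, Or.inl hlt⟩
    · rintro ⟨h, hlt | hA⟩
      · exact ⟨h, hlt⟩
      · exact ⟨h, hinc _ _ hA⟩
  rw [Finset.sum_congr rfl (fun π _ => hterm π)]
  rw [PsiAt]
  exact (Finset.sum_subtype (Finset.univ.filter
      (fun π : Equiv.Perm (Fin n) => DRespects A (fun i => π i)))
      (fun x => by simp)
      (fun π => (m + deltaOrd A (fun i => π i)).choose n)).symm
end

section
/- Let D = ([n], A) be an acyclic digraph with W(D) = ∅. Then Σ_{π ∈ OP(D)} C(x + δ_D(π), n) = Ω(D̄, x), the order polynomial of the reflexive transitive closure of D. -/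
namespace PsiAux

variable {n : ℕ} {A : Fin n → Fin n → Prop}

/-- The tie-breaking relation: reachability, or numeric order among incomparables. -/
def Rrel (A : Fin n → Fin n → Prop) (u v : Fin n) : Prop :=
  Relation.TransGen A u v ∨
    (¬ Relation.TransGen A u v ∧ ¬ Relation.TransGen A v u ∧ u < v)

/-- Key crossing lemma from `W(D) = ∅`. -/
theorem cross (hW : WEmpty A) {u v : Fin n} (huv : Relation.TransGen A u v) :
    ∀ w : Fin n, ¬ Relation.TransGen A w u → ¬ Relation.TransGen A u w →
      ¬ Relation.TransGen A w v → ¬ Relation.TransGen A v w →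
      v < w → w < u → False := by
  induction huv using Relation.TransGen.head_induction_on with
  | single ha =>
    rename_i a
    intro w h1 h2 h3 h4 h5 h6
    exact hW ⟨v, w, a, h5, h6, ha, h4, h3, h1, h2⟩
  | head h' h ihh =>
    rename_i a c -- h' : A a c, h : TransGen A c v, goal about a
    intro w h1 h2 h3 h4 h5 h6
    by_cases hwc : Relation.TransGen A w c
    · exact h3 (hwc.trans h)
    by_cases hcw : Relation.TransGen A c w
    · exact h2 ((Relation.TransGen.single h').trans hcw)
    rcases lt_trichotomy w c with hlt | heq | hgt
    · exact ihh w hwc hcw h3 h4 h5 hlt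
    · exact h2 (by rw [heq]; exact Relation.TransGen.single h')
    · exact hW ⟨c, w, a, hgt, h6, h', hcw, hwc, h1, h2⟩

theorem Rrel_trans (hW : WEmpty A) {u v w : Fin n} (h1 : Rrel A u v) (h2 : Rrel A v w) :
    Rrel A u w := by
  classical
  rcases h1 with h1 | ⟨nuv, nvu, huv⟩
  · rcases h2 with h2 | ⟨nvw, nwv, hvw⟩
    · exact Or.inl (h1.trans h2)
    · by_cases huw : Relation.TransGen A u w
      · exact Or.inl huw
      by_cases hwu : Relation.TransGen A w u
      · exact absurd (hwu.trans h1) nwv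
      refine Or.inr ⟨huw, hwu, ?_⟩
      by_contra hh
      rcases lt_trichotomy u w with h | h | h
      · exact hh h
      · subst h; exact nwv h1
      · exact cross hW h1 w hwu huw nwv nvw hvw h
  · rcases h2 with h2 | ⟨nvw, nwv, hvw⟩
    · by_cases huw : Relation.TransGen A u w
      · exact Or.inl huw
      by_cases hwu : Relation.TransGen A w u
      · exact absurd (h2.trans hwu) nvu
      refine Or.inr ⟨huw, hwu, ?_⟩
      by_contra hh
      rcases lt_trichotomy u w with h | h | h
      · exact hh h
      · subst h; exact nvu h2
      · exact cross hW h2 u nuv nvu huw hwu h huv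
    · by_cases huw : Relation.TransGen A u w
      · exact Or.inl huw
      by_cases hwu : Relation.TransGen A w u
      · exact (cross hW hwu v nvw nwv nvu nuv huv hvw).elim
      · exact Or.inr ⟨huw, hwu, huv.trans hvw⟩

theorem Rrel_irrefl (hacyc : ∀ v, ¬ Relation.TransGen A v v) (u : Fin n) : ¬ Rrel A u u := by
  rintro (h | ⟨_, _, h⟩)
  · exact hacyc u h
  · exact lt_irrefl _ h

theorem Rrel_total (u v : Fin n) (h : u ≠ v) : Rrel A u v ∨ Rrel A v u := by
  classical
  by_cases h1 : Relation.TransGen A u v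
  · exact Or.inl (Or.inl h1)
  by_cases h2 : Relation.TransGen A v u
  · exact Or.inr (Or.inl h2)
  rcases h.lt_or_gt with hl | hl
  · exact Or.inl (Or.inr ⟨h1, h2, hl⟩)
  · exact Or.inr (Or.inr ⟨h2, h1, hl⟩)

theorem Rrel_asymm (hacyc : ∀ v, ¬ Relation.TransGen A v v) {u v : Fin n}
    (h : Rrel A u v) : ¬ Rrel A v u := by
  rintro (h' | ⟨n1, n2, h'⟩) <;> rcases h with h | ⟨m1, m2, hlt⟩
  · exact hacyc u (h.trans h')
  · exact m2 h'
  · exact n2 h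
  · exact absurd hlt (asymm h')

end PsiAux

namespace PsiAux2
open PsiAux Finset

variable {n : ℕ} {A : Fin n → Fin n → Prop}

open Classical in
noncomputable def rank (A : Fin n → Fin n → Prop) (u : Fin n) : ℕ :=
  (Finset.univ.filter (fun w => Rrel A w u)).card

theorem rank_lt_rank (hacyc : ∀ v, ¬ Relation.TransGen A v v) (hW : WEmpty A)
    {u v : Fin n} (h : Rrel A u v) : rank A u < rank A v := by
  classical
  apply Finset.card_lt_card
  constructor
  · intro w hw
    simp only [Finset.mem_filter, Finset.mem_univ, true_and] at hw ⊢
    exact Rrel_trans hW hw h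
  · intro hsub
    have hu : u ∈ Finset.univ.filter (fun w => Rrel A w v) := by
      simp [Finset.mem_filter, h]
    have := hsub hu
    simp only [Finset.mem_filter, Finset.mem_univ, true_and] at this
    exact Rrel_irrefl hacyc u this

theorem rrel_iff_rank (hacyc : ∀ v, ¬ Relation.TransGen A v v) (hW : WEmpty A)
    {u v : Fin n} : Rrel A u v ↔ rank A u < rank A v := by
  constructor
  · exact rank_lt_rank hacyc hW
  · intro h
    by_contra hn
    rcases eq_or_ne u v with rfl | hne
    · exact lt_irrefl _ h
    rcases Rrel_total u v hne with h' | h'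
    · exact hn h'
    · exact absurd h (not_lt.2 (rank_lt_rank hacyc hW h').le)

theorem rank_lt_n (hacyc : ∀ v, ¬ Relation.TransGen A v v) (u : Fin n) :
    rank A u < n := by
  classical
  have : (Finset.univ.filter (fun w => Rrel A w u)) ⊆ Finset.univ.erase u := by
    intro w hw
    simp only [Finset.mem_filter, Finset.mem_univ, true_and] at hw
    refine Finset.mem_erase.2 ⟨fun he => Rrel_irrefl hacyc u (he ▸ hw), Finset.mem_univ _⟩
  calc rank A u ≤ (Finset.univ.erase u).card := Finset.card_le_card this
    _ < Finset.univ.card := Finset.card_erase_lt_of_mem (Finset.mem_univ u)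
    _ = n := by simp

noncomputable def key (A : Fin n → Fin n → Prop) {m : ℕ} (σ : Fin n → Fin m) (u : Fin n) : ℕ :=
  (σ u : ℕ) * n + rank A u

theorem key_lt_iff (hacyc : ∀ v, ¬ Relation.TransGen A v v) (hW : WEmpty A)
    {m : ℕ} (σ : Fin n → Fin m) {u v : Fin n} :
    key A σ u < key A σ v ↔ (σ u < σ v ∨ (σ u = σ v ∧ Rrel A u v)) := by
  have hru := rank_lt_n (A := A) hacyc u
  have hrv := rank_lt_n (A := A) hacyc v
  constructor
  · intro h
    rcases lt_trichotomy (σ u) (σ v) with hs | hs | hs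
    · exact Or.inl hs
    · refine Or.inr ⟨hs, (rrel_iff_rank hacyc hW).2 ?_⟩
      have : ((σ u : ℕ)) = (σ v : ℕ) := congrArg _ hs
      simp only [key, this] at h
      omega
    · exfalso
      have hs' : (σ v : ℕ) < (σ u : ℕ) := hs
      have : (σ v : ℕ) + 1 ≤ (σ u : ℕ) := hs'
      simp only [key] at h
      nlinarith
  · rintro (hs | ⟨hs, hr⟩)
    · have hs' : (σ u : ℕ) + 1 ≤ (σ v : ℕ) := hs
      simp only [key]
      nlinarith
    · have : ((σ u : ℕ)) = (σ v : ℕ) := congrArg _ hs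
      have hr' := (rrel_iff_rank hacyc hW).1 hr
      simp only [key, this]
      omega

theorem key_injective (hacyc : ∀ v, ¬ Relation.TransGen A v v) (hW : WEmpty A)
    {m : ℕ} (σ : Fin n → Fin m) : Function.Injective (key A σ) := by
  intro u v h
  by_contra hne
  rcases Rrel_total u v hne with h' | h'
  · have := (key_lt_iff hacyc hW σ (u := u) (v := v)).2
    rcases lt_trichotomy (σ u) (σ v) with hs | hs | hs
    · exact absurd (this (Or.inl hs)) (by omega)
    · exact absurd (this (Or.inr ⟨hs, h'⟩)) (by omega)
    · have := (key_lt_iff hacyc hW σ (u := v) (v := u)).2 (Or.inl hs)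
      omega
  · have := (key_lt_iff hacyc hW σ (u := v) (v := u)).2
    rcases lt_trichotomy (σ v) (σ u) with hs | hs | hs
    · exact absurd (this (Or.inl hs)) (by omega)
    · exact absurd (this (Or.inr ⟨hs, h'⟩)) (by omega)
    · have := (key_lt_iff hacyc hW σ (u := u) (v := v)).2 (Or.inl hs)
      omega

end PsiAux2

namespace PsiCount
open Finset

theorem strictMono_of_consec {n : ℕ} {α : Type*} [Preorder α] {f : Fin n → α}
    (h : ∀ (i : ℕ) (hi : i + 1 < n), f ⟨i, Nat.lt_of_succ_lt hi⟩ < f ⟨i + 1, hi⟩) :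
    StrictMono f := by
  have key : ∀ (k : ℕ) (i j : Fin n), (i : ℕ) + k + 1 = (j : ℕ) → f i < f j := by
    intro k
    induction k with
    | zero =>
      intro i j hij
      have hj : (i : ℕ) + 1 < n := by omega
      have : j = ⟨(i : ℕ) + 1, hj⟩ := by apply Fin.ext; simp only [Fin.val_mk]; omega
      rw [this]
      exact h i hj
    | succ k ih =>
      intro i j hij
      have hmid : (i : ℕ) + k + 1 < n := by omega
      have h1 : f i < f ⟨(i : ℕ) + k + 1, hmid⟩ := ih i ⟨(i : ℕ) + k + 1, hmid⟩ (by simp)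
      have h2 : f ⟨(i : ℕ) + k + 1, hmid⟩ < f j := by
        have hj : (i : ℕ) + k + 1 + 1 < n := by omega
        have : j = ⟨(i : ℕ) + k + 2, hj⟩ := by
          apply Fin.ext; simp only [Fin.val_mk]; omega
        rw [this]
        exact h ((i : ℕ) + k + 1) hj
      exact h1.trans h2
  intro i j hij
  exact key ((j : ℕ) - (i : ℕ) - 1) i j (by have := hij; omega)

theorem strictMono_step {n : ℕ} {α : Type*} {f : Fin n → ℕ}
    (hf : ∀ i j : Fin n, i < j → f i + ((j : ℕ) - (i : ℕ)) ≤ f j → True) : True := trivial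

/-- Strict mono sequences in Fin grow at least linearly. -/
theorem strictMono_add_le {n M : ℕ} {g : Fin n → Fin M} (hg : StrictMono g)
    (i j : Fin n) (hij : i ≤ j) : (g i : ℕ) + ((j : ℕ) - (i : ℕ)) ≤ (g j : ℕ) := by
  rcases eq_or_lt_of_le hij with rfl | hlt
  · simp
  have key : ∀ k : ℕ, ∀ i j : Fin n, (i : ℕ) + k + 1 = (j : ℕ) → (g i : ℕ) + k + 1 ≤ g j := by
    intro k
    induction k with
    | zero =>
      intro i j hij'
      have : i < j := by rw [Fin.lt_def]; omega
      have := hg this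
      rw [Fin.lt_def] at this
      omega
    | succ k ih =>
      intro i j hij'
      have hmid : (i : ℕ) + k + 1 < n := by omega
      have h1 := ih i ⟨(i : ℕ) + k + 1, hmid⟩ (by simp)
      have h2 : g ⟨(i : ℕ) + k + 1, hmid⟩ < g j := hg (by rw [Fin.lt_def]; simp; omega)
      rw [Fin.lt_def] at h2
      omega
  have := key ((j : ℕ) - (i : ℕ) - 1) i j (by rw [Fin.lt_def] at hlt; omega)
  rw [Fin.lt_def] at hlt
  omega

/-- The number of strictly monotone maps `Fin n → Fin M` is `M.choose n`. -/
theorem card_strictMono (n M : ℕ) :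
    Fintype.card {g : Fin n → Fin M // StrictMono g} = M.choose n := by
  classical
  have e : {g : Fin n → Fin M // StrictMono g} ≃ {s : Finset (Fin M) // s.card = n} := by
    refine
      { toFun := fun g => ⟨Finset.image g.1 Finset.univ, by
          rw [Finset.card_image_of_injective _ g.2.injective, Finset.card_univ,
            Fintype.card_fin]⟩
        invFun := fun s => ⟨fun i => s.1.orderEmbOfFin s.2 i,
          (s.1.orderEmbOfFin s.2).strictMono⟩
        left_inv := ?_
        right_inv := ?_ }
    · rintro ⟨g, hg⟩
      apply Subtype.ext
      funext i
      have := Finset.orderEmbOfFin_unique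
        (s := Finset.image g Finset.univ)
        (by rw [Finset.card_image_of_injective _ hg.injective, Finset.card_univ,
            Fintype.card_fin])
        (f := g) (fun x => Finset.mem_image_of_mem _ (Finset.mem_univ x)) hg
      exact (congrFun this i).symm
    · rintro ⟨s, hs⟩
      apply Subtype.ext
      simp only
      ext x
      simp only [Finset.mem_image, Finset.mem_univ, true_and]
      constructor
      · rintro ⟨i, rfl⟩
        exact Finset.orderEmbOfFin_mem s hs i
      · intro hx
        have : x ∈ Set.range (s.orderEmbOfFin hs) := by
          rw [Finset.range_orderEmbOfFin]
          exact hx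
        rcases this with ⟨i, hi⟩
        exact ⟨i, hi⟩
  rw [Fintype.card_congr e, Fintype.card_finset_len, Fintype.card_fin]

end PsiCount

namespace PsiCount

/-- Admissibility of a sequence w.r.t. a pattern `Q` of weak positions. -/
def Adm {n m : ℕ} (Q : ℕ → Prop) (f : Fin n → Fin m) : Prop :=
  ∀ (i : ℕ) (hi : i + 1 < n),
    f ⟨i, Nat.lt_of_succ_lt hi⟩ ≤ f ⟨i + 1, hi⟩ ∧
      (Q i ∨ f ⟨i, Nat.lt_of_succ_lt hi⟩ < f ⟨i + 1, hi⟩)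

theorem card_adm {n m : ℕ} (hm : 0 < m) (Q : ℕ → Prop) [DecidablePred Q] :
    Nat.card {f : Fin n → Fin m // Adm Q f} =
      (m + ((Finset.range (n - 1)).filter Q).card).choose n := by
  classical
  set S := (Finset.range (n - 1)).filter Q with hS
  set d := S.card with hd
  set c : ℕ → ℕ := fun i => (S.filter (· < i)).card with hc
  have hcd : ∀ i, c i ≤ d := fun i => Finset.card_le_card (Finset.filter_subset _ _)
  have hci : ∀ i, c i ≤ i := by
    intro i
    calc c i ≤ (Finset.range i).card := Finset.card_le_card (by
          intro x hx
          simp only [hc, Finset.mem_filter] at hx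
          exact Finset.mem_range.2 hx.2)
      _ = i := Finset.card_range i
  have hsucc : ∀ i, i + 1 < n → Q i → c (i + 1) = c i + 1 := by
    intro i hi hQ
    have hiS : i ∈ S := by
      simp only [hS, Finset.mem_filter, Finset.mem_range]
      exact ⟨by omega, hQ⟩
    have : S.filter (· < i + 1) = insert i (S.filter (· < i)) := by
      ext x
      simp only [Finset.mem_filter, Finset.mem_insert]
      constructor
      · rintro ⟨hxS, hx⟩
        rcases eq_or_ne x i with rfl | hne
        · exact Or.inl rfl
        · exact Or.inr ⟨hxS, by omega⟩
      · rintro (rfl | ⟨hxS, hx⟩)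
        · exact ⟨hiS, by omega⟩
        · exact ⟨hxS, by omega⟩
    rw [hc]
    simp only
    rw [this, Finset.card_insert_of_notMem (by simp)]
  have hsucc' : ∀ i, ¬ Q i → c (i + 1) = c i := by
    intro i hQ
    have : S.filter (· < i + 1) = S.filter (· < i) := by
      ext x
      simp only [Finset.mem_filter]
      constructor
      · rintro ⟨hxS, hx⟩
        refine ⟨hxS, ?_⟩
        rcases eq_or_ne x i with rfl | hne
        · exact absurd (Finset.mem_filter.1 hxS).2 hQ
        · omega
      · rintro ⟨hxS, hx⟩
        exact ⟨hxS, by omega⟩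
    rw [hc]; simp only; rw [this]
  have hbound : ∀ j : ℕ, j < n → d ≤ c j + (n - 1 - j) := by
    intro j hj
    have hsplit := Finset.card_filter_add_card_filter_not
      (s := S) (p := (· < j))
    have hsub : S.filter (fun x => ¬ x < j) ⊆ Finset.Ico j (n - 1) := by
      intro x hx
      simp only [Finset.mem_filter, hS, Finset.mem_range] at hx
      exact Finset.mem_Ico.2 ⟨by omega, hx.1.1⟩
    have := Finset.card_le_card hsub
    rw [Nat.card_Ico] at this
    have hcj : c j = (S.filter (· < j)).card := rfl
    have hdd : d = S.card := rfl
    omega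
  -- the equivalence with strictly monotone sequences
  have e : {f : Fin n → Fin m // Adm Q f} ≃ {g : Fin n → Fin (m + d) // StrictMono g} := by
    refine
      { toFun := fun f => ⟨fun j => ⟨(f.1 j : ℕ) + c j, ?_⟩, ?_⟩
        invFun := fun g => ⟨fun j => ⟨(g.1 j : ℕ) - c j, ?_⟩, ?_⟩
        left_inv := ?_
        right_inv := ?_ }
    · have := (f.1 j).2
      have := hcd (j : ℕ)
      omega
    · apply strictMono_of_consec
      intro i hi
      have hadm := f.2 i hi
      simp only [Fin.mk_lt_mk]
      by_cases hQ : Q i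
      · have := hsucc i hi hQ
        have h1 : (f.1 ⟨i, Nat.lt_of_succ_lt hi⟩ : ℕ) ≤ (f.1 ⟨i + 1, hi⟩ : ℕ) := hadm.1
        omega
      · have := hsucc' i hQ
        have h1 : (f.1 ⟨i, Nat.lt_of_succ_lt hi⟩ : ℕ) < (f.1 ⟨i + 1, hi⟩ : ℕ) := by
          rcases hadm.2 with h | h
          · exact absurd h hQ
          · exact h
        omega
    · -- bound for the inverse map
      have hn : 0 < n := j.pos
      have hlast : (j : ℕ) ≤ n - 1 := by omega
      have hmem : (⟨n - 1, by omega⟩ : Fin n) = ⟨n - 1, by omega⟩ := rfl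
      have hle : (g.1 j : ℕ) + (n - 1 - (j : ℕ)) ≤ (g.1 ⟨n - 1, by omega⟩ : ℕ) := by
        have := strictMono_add_le g.2 j ⟨n - 1, by omega⟩ (by
          rw [Fin.le_def]; simp only [Fin.val_mk]; omega)
        simpa using this
      have h2 : (g.1 ⟨n - 1, by omega⟩ : ℕ) < m + d := (g.1 _).2
      have h3 := hbound (j : ℕ) j.2
      have h4 := hcd (j : ℕ)
      omega
    · -- admissibility of the inverse
      intro i hi
      have hlt : g.1 ⟨i, Nat.lt_of_succ_lt hi⟩ < g.1 ⟨i + 1, hi⟩ :=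
        g.2 (by rw [Fin.lt_def]; simp only [Fin.val_mk]; omega)
      rw [Fin.lt_def] at hlt
      have hge : c (i : ℕ) ≤ (g.1 ⟨i, Nat.lt_of_succ_lt hi⟩ : ℕ) := by
        have hn : 0 < n := by omega
        have h0 := strictMono_add_le g.2 ⟨0, hn⟩ ⟨i, Nat.lt_of_succ_lt hi⟩ (by
          rw [Fin.le_def]; simp)
        simp only [Fin.val_mk, Nat.sub_zero] at h0
        have := hci (i : ℕ)
        omega
      constructor
      · rw [Fin.le_def]
        simp only [Fin.val_mk]
        by_cases hQ : Q i
        · have := hsucc i hi hQ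
          omega
        · have := hsucc' i hQ
          omega
      · by_cases hQ : Q i
        · exact Or.inl hQ
        · refine Or.inr ?_
          rw [Fin.lt_def]
          simp only [Fin.val_mk]
          have := hsucc' i hQ
          omega
    · -- left inverse
      rintro ⟨f, hf⟩
      apply Subtype.ext
      funext j
      apply Fin.ext
      simp only [Fin.val_mk]
      omega
    · -- right inverse
      rintro ⟨g, hg⟩
      apply Subtype.ext
      funext j
      apply Fin.ext
      simp only [Fin.val_mk]
      have hge : c (j : ℕ) ≤ (g j : ℕ) := by
        have hn : 0 < n := j.pos
        have h0 := strictMono_add_le hg ⟨0, hn⟩ j (by rw [Fin.le_def]; simp)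
        simp only [Fin.val_mk, Nat.sub_zero] at h0
        have := hci (j : ℕ)
        omega
      omega
  rw [Nat.card_congr e, Nat.card_eq_fintype_card, card_strictMono]

end PsiCount

namespace PsiMain
open PsiAux PsiAux2 PsiCount Finset

variable {n m : ℕ} {A : Fin n → Fin n → Prop}

/-- The weak-position pattern of an ordering `π`. -/
def Qp (A : Fin n → Fin n → Prop) (π : Fin n → Fin n) (i : ℕ) : Prop :=
  ∃ h : i + 1 < n, π ⟨i, Nat.lt_of_succ_lt h⟩ < π ⟨i + 1, h⟩ ∨
    A (π ⟨i, Nat.lt_of_succ_lt h⟩) (π ⟨i + 1, h⟩)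

theorem filter_irrel {α : Type*} {p : α → Prop} (h1 h2 : DecidablePred p) (s : Finset α) :
    @Finset.filter α p h1 s = @Finset.filter α p h2 s := by
  have : h1 = h2 := Subsingleton.elim _ _
  rw [this]

open Classical in
theorem delta_eq (π : Fin n → Fin n) :
    deltaOrd A π = ((Finset.range (n - 1)).filter (Qp A π)).card := by
  classical
  unfold deltaOrd Qp
  congr 1
  exact filter_irrel _ _ _

theorem monotone_of_consec {α : Type*} [Preorder α] {f : Fin n → α}
    (h : ∀ (i : ℕ) (hi : i + 1 < n), f ⟨i, Nat.lt_of_succ_lt hi⟩ ≤ f ⟨i + 1, hi⟩) :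
    Monotone f := by
  have key : ∀ (k : ℕ) (i j : Fin n), (i : ℕ) + k = (j : ℕ) → f i ≤ f j := by
    intro k
    induction k with
    | zero => intro i j hij; have : i = j := Fin.ext (by omega); rw [this]
    | succ k ih =>
      intro i j hij
      have hmid : (i : ℕ) + k < n := by omega
      refine (ih i ⟨(i : ℕ) + k, hmid⟩ (by simp)).trans ?_
      have hj : (i : ℕ) + k + 1 < n := by omega
      have : j = ⟨(i : ℕ) + k + 1, hj⟩ := Fin.ext (by simp; omega)
      rw [this]
      exact h ((i : ℕ) + k) hj
  intro i j hij
  exact key ((j : ℕ) - (i : ℕ)) i j (by rw [Fin.le_def] at hij; omega)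

theorem DRespects_transGen {π : Equiv.Perm (Fin n)} (hπ : DRespects A (fun i => π i))
    {u v : Fin n} (h : Relation.TransGen A u v) : π.symm u < π.symm v := by
  induction h with
  | single h => exact hπ _ _ (by simpa using h)
  | tail _ h ih => exact ih.trans (hπ _ _ (by simpa using h))

section
variable (hacyc : ∀ v, ¬ Relation.TransGen A v v) (hW : WEmpty A)
  {σ : Fin n → Fin m} (hσ : ∀ u v : Fin n, Relation.ReflTransGen A u v → σ u ≤ σ v)

include hacyc hW hσ

/-- Any valid ordering for `σ` sorts the key strictly. -/
theorem strictMono_key_of_valid {π : Equiv.Perm (Fin n)}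
    (hπ : DRespects A (fun i => π i)) (hadm : Adm (Qp A (π ·)) (fun j => σ (π j))) :
    StrictMono (fun j => key A σ (π j)) := by
  apply strictMono_of_consec
  intro i hi
  obtain ⟨h1, h2⟩ := hadm i hi
  simp only at h1 h2
  set u := π ⟨i, Nat.lt_of_succ_lt hi⟩ with hu
  set v := π ⟨i + 1, hi⟩ with hv
  rw [key_lt_iff hacyc hW]
  rcases lt_or_eq_of_le h1 with hlt | heq
  · exact Or.inl hlt
  refine Or.inr ⟨heq, ?_⟩
  have hQ : Qp A (π ·) i := by
    rcases h2 with h | h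
    · exact h
    · exact absurd h (by rw [heq]; exact lt_irrefl _)
  obtain ⟨_, hQ⟩ := hQ
  have hQ' : u < v ∨ A u v := hQ
  rcases hQ' with hlt | harc
  · by_cases h3 : Relation.TransGen A u v
    · exact Or.inl h3
    by_cases h4 : Relation.TransGen A v u
    · exfalso
      have := DRespects_transGen hπ h4
      simp only [Equiv.symm_apply_apply, hu, hv] at this
      rw [Fin.lt_def] at this
      simp at this
    · exact Or.inr ⟨h3, h4, hlt⟩
  · exact Or.inl (Relation.TransGen.single harc)

/-- Conversely, the key-sorted ordering is valid. -/
theorem valid_of_strictMono_key {π : Equiv.Perm (Fin n)}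
    (hK : StrictMono (fun j => key A σ (π j))) :
    DRespects A (fun i => π i) ∧ Adm (Qp A (π ·)) (fun j => σ (π j)) := by
  have hrefl : ∀ i j : Fin n, key A σ (π i) < key A σ (π j) ↔ i < j := fun i j =>
    hK.lt_iff_lt
  have hkey_of : ∀ u v : Fin n, Relation.TransGen A u v → key A σ u < key A σ v := by
    intro u v h
    rw [key_lt_iff hacyc hW]
    have hle : σ u ≤ σ v := hσ u v h.to_reflTransGen
    rcases lt_or_eq_of_le hle with hlt | heq
    · exact Or.inl hlt
    · exact Or.inr ⟨heq, Or.inl h⟩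
  constructor
  · intro i j hA
    have := hkey_of _ _ (Relation.TransGen.single hA)
    rw [hrefl] at this
    exact this
  · intro i hi
    have hik : (⟨i, Nat.lt_of_succ_lt hi⟩ : Fin n) < ⟨i + 1, hi⟩ := by
      rw [Fin.lt_def]; simp
    have hk := hK hik
    set u := π ⟨i, Nat.lt_of_succ_lt hi⟩ with hu
    set v := π ⟨i + 1, hi⟩ with hv
    rw [key_lt_iff hacyc hW] at hk
    rcases hk with hlt | ⟨heq, hR⟩
    · exact ⟨hlt.le, Or.inr hlt⟩
    refine ⟨heq.le, Or.inl ?_⟩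
    rcases hR with hT | ⟨_, _, hlt⟩
    · -- a directed path with equal σ values: must be a single arc
      have heq' : σ u = σ v := heq
      have hT' : Relation.TransGen A u v := hT
      rcases (Relation.TransGen.head'_iff).1 hT' with ⟨x, hux, hxv⟩
      rcases (Relation.ReflTransGen.cases_head hxv) with rfl | ⟨y, hxy, hyv⟩
      · exact ⟨hi, Or.inr hux⟩
      exfalso
      have hxv' : Relation.TransGen A x v := Relation.TransGen.head' hxy hyv
      have h1 : σ u ≤ σ x := hσ u x (Relation.ReflTransGen.single hux)
      have h2 : σ x ≤ σ v := hσ x v hxv'.to_reflTransGen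
      have hux' : σ u = σ x := le_antisymm h1 (h2.trans heq'.ge)
      have hxv'' : σ x = σ v := le_antisymm h2 (heq'.ge.trans h1)
      have k1 : key A σ u < key A σ x := by
        rw [key_lt_iff hacyc hW]
        exact Or.inr ⟨hux', Or.inl (Relation.TransGen.single hux)⟩
      have k2 : key A σ x < key A σ v := by
        rw [key_lt_iff hacyc hW]
        exact Or.inr ⟨hxv'', Or.inl hxv'⟩
      have e1 : key A σ u = key A σ (π ⟨i, Nat.lt_of_succ_lt hi⟩) := rfl
      have e2 : key A σ v = key A σ (π ⟨i + 1, hi⟩) := rfl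
      have e3 : x = π (π.symm x) := (Equiv.apply_symm_apply π x).symm
      rw [e1, e3] at k1
      rw [e2, e3] at k2
      rw [hrefl] at k1 k2
      rw [Fin.lt_def] at k1 k2
      simp only [Fin.val_mk] at k1 k2
      omega
    · exact ⟨hi, Or.inl hlt⟩

end
end PsiMain

namespace PsiFinal
open PsiAux PsiAux2 PsiCount PsiMain Finset

variable {n m : ℕ} {A : Fin n → Fin n → Prop}

/-- Validity gives order preservation. -/
theorem mono_of_valid {σ : Fin n → Fin m} {π : Equiv.Perm (Fin n)}
    (hπ : DRespects A (fun i => π i)) (hadm : Adm (Qp A (π ·)) (fun j => σ (π j))) :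
    ∀ u v : Fin n, Relation.ReflTransGen A u v → σ u ≤ σ v := by
  have hmono : Monotone (fun j => σ (π j)) := by
    apply monotone_of_consec
    intro i hi
    exact (hadm i hi).1
  have harc : ∀ u v : Fin n, A u v → σ u ≤ σ v := by
    intro u v h
    have hidx : π.symm u < π.symm v := hπ _ _ (by simpa using h)
    have := hmono hidx.le
    simpa using this
  intro u v h
  induction h with
  | refl => exact le_refl _
  | tail _ h ih => exact ih.trans (harc _ _ h)

theorem Psi_main (hacyc : ∀ v, ¬ Relation.TransGen A v v) (hW : WEmpty A)
    (hm : 0 < m) : PsiAt A m = orderPolyAt A m := by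
  classical
  set OPs : Finset (Equiv.Perm (Fin n)) :=
    Finset.univ.filter (fun π : Equiv.Perm (Fin n) => DRespects A (fun i => π i)) with hOPs
  set C : Equiv.Perm (Fin n) → Finset (Fin n → Fin m) :=
    fun π => Finset.univ.filter (fun σ => Adm (Qp A (π ·)) (fun j => σ (π j))) with hC
  -- term-by-term cardinality
  have hcard : ∀ π : Equiv.Perm (Fin n),
      (m + deltaOrd A (fun i => π i)).choose n = (C π).card := by
    intro π
    rw [delta_eq (A := A) (π := fun i => π i), ← card_adm hm (Qp A (fun i => π i))]
    have e : {σ : Fin n → Fin m // Adm (Qp A (π ·)) (fun j => σ (π j))} ≃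
        {f : Fin n → Fin m // Adm (Qp A (π ·)) f} :=
      { toFun := fun σ => ⟨fun j => σ.1 (π j), σ.2⟩
        invFun := fun f => ⟨fun u => f.1 (π.symm u), by
          simpa [Equiv.symm_apply_apply] using f.2⟩
        left_inv := fun σ => by
          apply Subtype.ext; funext u; simp
        right_inv := fun f => by
          apply Subtype.ext; funext j; simp }
    rw [← Nat.card_congr e, Nat.card_eq_fintype_card, Fintype.card_subtype]
  -- each valid ordering sorts the key
  have hsorts : ∀ π ∈ OPs, ∀ σ ∈ C π, StrictMono (fun j => key A σ (π j)) := by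
    intro π hπ σ hσ'
    rw [hOPs, Finset.mem_filter] at hπ
    rw [hC] at hσ'
    simp only [Finset.mem_filter, Finset.mem_univ, true_and] at hσ'
    exact strictMono_key_of_valid hacyc hW (mono_of_valid hπ.2 hσ') hπ.2 hσ'
  -- disjointness
  have hdisj : ∀ π ∈ OPs, ∀ τ ∈ OPs, π ≠ τ → Disjoint (C π) (C τ) := by
    intro π hπ τ hτ hne
    rw [Finset.disjoint_left]
    intro σ h1 h2
    apply hne
    have k1 := hsorts π hπ σ h1
    have k2 := hsorts τ hτ σ h2
    have := Tuple.unique_monotone (f := key A σ) (σ := π) (τ := τ)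
      k1.monotone k2.monotone
    apply Equiv.ext
    intro i
    exact key_injective hacyc hW σ (congrFun this i)
  -- the union is the set of order-preserving maps
  have hunion : OPs.biUnion C =
      Finset.univ.filter (fun σ : Fin n → Fin m =>
        ∀ u v : Fin n, Relation.ReflTransGen A u v → σ u ≤ σ v) := by
    ext σ
    simp only [Finset.mem_biUnion, Finset.mem_filter, Finset.mem_univ, true_and]
    constructor
    · rintro ⟨π, hπ, hσ'⟩
      rw [hOPs, Finset.mem_filter] at hπ
      rw [hC] at hσ'
      simp only [Finset.mem_filter, Finset.mem_univ, true_and] at hσ'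
      exact mono_of_valid hπ.2 hσ'
    · intro hmono
      set π := Tuple.sort (key A σ) with hπdef
      have hK : StrictMono (fun j => key A σ (π j)) := by
        have h1 : Monotone (key A σ ∘ π) := Tuple.monotone_sort (key A σ)
        have h2 : Function.Injective (key A σ ∘ π) :=
          (key_injective hacyc hW σ).comp π.injective
        exact h1.strictMono_of_injective h2
      obtain ⟨hDR, hAdm⟩ := valid_of_strictMono_key hacyc hW hmono hK
      refine ⟨π, ?_, ?_⟩
      · rw [hOPs, Finset.mem_filter]; exact ⟨Finset.mem_univ _, hDR⟩
      · rw [hC]; simp only [Finset.mem_filter, Finset.mem_univ, true_and]; exact hAdm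
  calc PsiAt A m = ∑ π ∈ OPs, (C π).card := by
        rw [PsiAt]
        exact Finset.sum_congr rfl (fun π _ => hcard π)
    _ = (OPs.biUnion C).card := (Finset.card_biUnion hdisj).symm
    _ = (Finset.univ.filter (fun σ : Fin n → Fin m =>
          ∀ u v : Fin n, Relation.ReflTransGen A u v → σ u ≤ σ v)).card := by rw [hunion]
    _ = orderPolyAt A m := by
        rw [orderPolyAt, Nat.card_eq_fintype_card, Fintype.card_subtype]

end PsiFinal



/-- Theorem 1.4: if `D = ([n], A)` is an acyclic digraph with
`W(D) = ∅`, then `Σ_{π ∈ OP(D)} C(x + δ_D(π), n) = Ω(D̄, x)`, the order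
polynomial of the reflexive transitive closure of `D` (as an identity of
polynomials, i.e. at every positive integer `x = m`). -/
theorem Psi_eq_orderPoly_of_WEmpty {n : ℕ} (A : Fin n → Fin n → Prop)
    (hacyc : ∀ v, ¬ Relation.TransGen A v v)
    (hW : WEmpty A) :
    ∀ m : ℕ, 0 < m → PsiAt A m = orderPolyAt A m := fun _ hm =>
  PsiFinal.Psi_main hacyc hW hm
end

section
/- Let G = ([n], E) be a simple graph. Then (−1)^n χ(G, −x) = Σ_{π} C(x + δ_G(π), n), where the sum runs over all n! orderings π of [n], if and only if W(G) = ∅. -/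
open Classical in
/-- `Ψ(G, m) = Σ_π C(m + δ_G(π), n)`, summed over all `n!` orderings `π` of
`[n]`. -/
noncomputable def PsiGAt {n : ℕ} (G : SimpleGraph (Fin n)) (m : ℕ) : ℕ :=
  ∑ π : Equiv.Perm (Fin n), (m + deltaOrd G.Adj (fun i => π i)).choose n

/-- `W(G) = ∅`: there is no triple `a < b < c` whose induced subgraph has
`ac` as its only edge. -/
def WGEmpty {n : ℕ} (G : SimpleGraph (Fin n)) : Prop :=
  ¬ ∃ a b c : Fin n, a < b ∧ b < c ∧ G.Adj a c ∧ ¬ G.Adj a b ∧ ¬ G.Adj b c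

/-- The number of proper colorings of `G` with `k` colors. -/
noncomputable def properColorings {n : ℕ} (G : SimpleGraph (Fin n)) (k : ℕ) : ℕ :=
  Nat.card {f : Fin n → Fin k // ∀ u v : Fin n, G.Adj u v → f u ≠ f v}


namespace CR


variable {n : ℕ}

lemma strictMono_of_step {α : Type*} [Preorder α] {d : Fin n → α}
    (h : ∀ t (ht : t + 1 < n), d ⟨t, Nat.lt_of_succ_lt ht⟩ < d ⟨t + 1, ht⟩) :
    StrictMono d := by
  intro i j hij
  obtain ⟨jv, hjv⟩ := j
  simp only [Fin.lt_def, Fin.val_mk] at hij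
  induction jv with
  | zero => omega
  | succ t ih =>
    have ht : t + 1 < n := hjv
    rcases eq_or_lt_of_le (Nat.lt_succ_iff.mp hij) with he | hlt
    · have : i = ⟨t, Nat.lt_of_succ_lt ht⟩ := Fin.ext he
      rw [this]; exact h t ht
    · exact lt_trans (ih (Nat.lt_of_succ_lt ht) hlt) (h t ht)

lemma monotone_of_step {α : Type*} [Preorder α] {d : Fin n → α}
    (h : ∀ t (ht : t + 1 < n), d ⟨t, Nat.lt_of_succ_lt ht⟩ ≤ d ⟨t + 1, ht⟩) :
    Monotone d := by
  intro i j hij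
  obtain ⟨jv, hjv⟩ := j
  simp only [Fin.le_def, Fin.val_mk] at hij
  induction jv with
  | zero =>
    have : i = ⟨0, hjv⟩ := Fin.ext (Nat.le_zero.mp hij)
    rw [this]
  | succ t ih =>
    have ht : t + 1 < n := hjv
    rcases eq_or_lt_of_le hij with he | hlt
    · exact le_of_eq (congrArg d (Fin.ext he))
    · exact le_trans (ih (Nat.lt_of_succ_lt ht) (by omega)) (h t ht)


open Classical

variable {n : ℕ} (G : SimpleGraph (Fin n))

/-- the δ condition on an ordered pair -/
def dc (u v : Fin n) : Prop := u < v ∨ G.Adj u v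

/-- validity of a pair (π, c) -/
def Valid (k : ℕ) (π : Equiv.Perm (Fin n)) (c : Fin n → Fin k) : Prop :=
  ∀ t (ht : t + 1 < n),
    c ⟨t, Nat.lt_of_succ_lt ht⟩ ≤ c ⟨t + 1, ht⟩ ∧
      (dc G (π ⟨t, Nat.lt_of_succ_lt ht⟩) (π ⟨t + 1, ht⟩) →
        c ⟨t, Nat.lt_of_succ_lt ht⟩ < c ⟨t + 1, ht⟩)

/-- weak position -/
def wkp (π : Equiv.Perm (Fin n)) (t : ℕ) : Prop :=
  ∃ ht : t + 1 < n, ¬ dc G (π ⟨t, Nat.lt_of_succ_lt ht⟩) (π ⟨t + 1, ht⟩)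

open Classical in
noncomputable def scount (π : Equiv.Perm (Fin n)) (i : ℕ) : ℕ :=
  ((Finset.range i).filter (wkp G π)).card

lemma scount_le (π : Equiv.Perm (Fin n)) (i : ℕ) : scount G π i ≤ i := by
  classical
  calc ((Finset.range i).filter (wkp G π)).card ≤ (Finset.range i).card :=
        Finset.card_filter_le _ _
    _ = i := Finset.card_range i

lemma scount_mono (π : Equiv.Perm (Fin n)) : Monotone (scount G π) := by
  intro i j hij
  classical
  exact Finset.card_le_card (Finset.filter_subset_filter _
    (Finset.range_subset_range.mpr hij))

lemma scount_succ_of_wkp (π : Equiv.Perm (Fin n)) {i : ℕ} (h : wkp G π i) :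
    scount G π (i + 1) = scount G π i + 1 := by
  classical
  unfold scount
  rw [Finset.range_add_one, Finset.filter_insert, if_pos h,
    Finset.card_insert_of_notMem (by simp)]

lemma scount_succ_of_not_wkp (π : Equiv.Perm (Fin n)) {i : ℕ} (h : ¬ wkp G π i) :
    scount G π (i + 1) = scount G π i := by
  classical
  unfold scount
  rw [Finset.range_add_one, Finset.filter_insert, if_neg h]

lemma deltaOrd_le (π : Equiv.Perm (Fin n)) : deltaOrd G.Adj (fun i => π i) ≤ n - 1 := by
  classical
  calc _ ≤ (Finset.range (n-1)).card := Finset.card_filter_le _ _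
    _ = n - 1 := Finset.card_range _

lemma scount_top (π : Equiv.Perm (Fin n)) :
    scount G π (n - 1) = n - 1 - deltaOrd G.Adj (fun i => π i) := by
  classical
  have key : ∀ i ∈ Finset.range (n - 1), wkp G π i ↔
      ¬ (∃ h : i + 1 < n, π ⟨i, Nat.lt_of_succ_lt h⟩ < π ⟨i + 1, h⟩ ∨
          G.Adj (π ⟨i, Nat.lt_of_succ_lt h⟩) (π ⟨i + 1, h⟩)) := by
    intro i hi
    have hin : i + 1 < n := by
      have := Finset.mem_range.mp hi; omega
    constructor
    · rintro ⟨h, hnd⟩ ⟨h', hd⟩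
      exact hnd hd
    · intro hnot
      exact ⟨hin, fun hd => hnot ⟨hin, hd⟩⟩
  have h1 : scount G π (n - 1) =
      ((Finset.range (n - 1)).filter (fun i =>
        ¬ (∃ h : i + 1 < n, π ⟨i, Nat.lt_of_succ_lt h⟩ < π ⟨i + 1, h⟩ ∨
          G.Adj (π ⟨i, Nat.lt_of_succ_lt h⟩) (π ⟨i + 1, h⟩)))).card := by
    unfold scount
    congr 1
    exact Finset.filter_congr (fun i hi => by rw [key i hi])
  rw [h1]
  have h2 := Finset.card_filter_add_card_filter_not
    (s := Finset.range (n - 1)) (p := fun i =>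
      ∃ h : i + 1 < n, π ⟨i, Nat.lt_of_succ_lt h⟩ < π ⟨i + 1, h⟩ ∨
          G.Adj (π ⟨i, Nat.lt_of_succ_lt h⟩) (π ⟨i + 1, h⟩))
  rw [Finset.card_range] at h2
  have h3 : deltaOrd G.Adj (fun i => π i) =
      ((Finset.range (n - 1)).filter (fun i =>
        ∃ h : i + 1 < n, π ⟨i, Nat.lt_of_succ_lt h⟩ < π ⟨i + 1, h⟩ ∨
          G.Adj (π ⟨i, Nat.lt_of_succ_lt h⟩) (π ⟨i + 1, h⟩))).card := by
    unfold deltaOrd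
    congr 1
  omega


variable {N : ℕ}

noncomputable def smEquiv (n N : ℕ) :
    {d : Fin n → Fin N // StrictMono d} ≃ {s : Finset (Fin N) // s.card = n} where
  toFun d := ⟨Finset.image d.1 Finset.univ, by
    rw [Finset.card_image_of_injective _ d.2.injective, Finset.card_univ, Fintype.card_fin]⟩
  invFun s := ⟨(s.1.orderEmbOfFin s.2 : Fin n → Fin N), (s.1.orderEmbOfFin s.2).strictMono⟩
  left_inv d := by
    apply Subtype.ext
    exact (Finset.orderEmbOfFin_unique _ (fun x => Finset.mem_image_of_mem _ (Finset.mem_univ x))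
      d.2).symm
  right_inv s := by
    apply Subtype.ext
    have h := Finset.range_orderEmbOfFin s.1 s.2
    ext x
    simp only [Finset.mem_image, Finset.mem_univ, true_and]
    constructor
    · rintro ⟨i, rfl⟩
      have : (s.1.orderEmbOfFin s.2) i ∈ Set.range (s.1.orderEmbOfFin s.2) := ⟨i, rfl⟩
      rw [h] at this; exact this
    · intro hx
      have : x ∈ Set.range (s.1.orderEmbOfFin s.2) := by rw [h]; exact hx
      exact this

lemma card_strictMono (n N : ℕ) :
    Nat.card {d : Fin n → Fin N // StrictMono d} = N.choose n := by
  rw [Nat.card_congr (smEquiv n N), Nat.card_eq_fintype_card, Fintype.card_finset_len,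
    Fintype.card_fin]


variable {n : ℕ} (G : SimpleGraph (Fin n))

lemma le_apply_of_strictMono {N : ℕ} {d : Fin n → Fin N} (hd : StrictMono d) :
    ∀ iv (hiv : iv < n), iv ≤ (d ⟨iv, hiv⟩ : ℕ) := by
  intro iv
  induction iv with
  | zero => omega
  | succ t ih =>
    intro hiv
    have h1 := ih (Nat.lt_of_succ_lt hiv)
    have h2 := Fin.lt_def.mp (hd (Fin.mk_lt_mk.mpr (Nat.lt_succ_self t)
      : (⟨t, Nat.lt_of_succ_lt hiv⟩ : Fin n) < ⟨t + 1, hiv⟩))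
    omega

lemma dbound {k : ℕ} (π : Equiv.Perm (Fin n))
    (d : Fin n → Fin (k + scount G π (n - 1))) (hd : StrictMono d) :
    ∀ iv (hiv : iv < n), scount G π iv ≤ (d ⟨iv, hiv⟩ : ℕ) ∧
      (d ⟨iv, hiv⟩ : ℕ) < k + scount G π iv := by
  have b2 : ∀ t iv (hiv : iv < n), n - 1 - iv = t →
      (d ⟨iv, hiv⟩ : ℕ) < k + scount G π iv := by
    intro t
    induction t with
    | zero =>
      intro iv hiv h0
      have hiv' : iv = n - 1 := by omega
      subst hiv'
      exact (d _).isLt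
    | succ t ih =>
      intro iv hiv h
      have hiv1 : iv + 1 < n := by omega
      have hdlt := Fin.lt_def.mp (hd (Fin.mk_lt_mk.mpr (Nat.lt_succ_self iv)
        : (⟨iv, hiv⟩ : Fin n) < ⟨iv + 1, hiv1⟩))
      have h2 := ih (iv + 1) hiv1 (by omega)
      by_cases hw : wkp G π iv
      · rw [scount_succ_of_wkp G π hw] at h2; omega
      · rw [scount_succ_of_not_wkp G π hw] at h2; omega
  intro iv hiv
  refine ⟨?_, b2 (n - 1 - iv) iv hiv rfl⟩
  calc scount G π iv ≤ iv := scount_le G π iv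
    _ ≤ _ := le_apply_of_strictMono hd iv hiv

noncomputable def validEquiv (k : ℕ) (π : Equiv.Perm (Fin n)) :
    {c : Fin n → Fin k // Valid G k π c} ≃
      {d : Fin n → Fin (k + scount G π (n - 1)) // StrictMono d} where
  toFun c := ⟨fun i => ⟨(c.1 i : ℕ) + scount G π i.1, by
      have h1 : (c.1 i : ℕ) < k := (c.1 i).isLt
      have h2 : scount G π i.1 ≤ scount G π (n - 1) :=
        scount_mono G π (by omega : (i : ℕ) ≤ n - 1)
      omega⟩, by
    apply strictMono_of_step
    intro t ht
    simp only [Fin.mk_lt_mk, Fin.val_mk]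
    by_cases hw : wkp G π t
    · have hs := scount_succ_of_wkp G π hw
      have hc := Fin.le_def.mp (c.2 t ht).1
      omega
    · have hs := scount_succ_of_not_wkp G π hw
      have hdc : dc G (π ⟨t, Nat.lt_of_succ_lt ht⟩) (π ⟨t + 1, ht⟩) := by
        by_contra hn
        exact hw ⟨ht, hn⟩
      have hc := Fin.lt_def.mp ((c.2 t ht).2 hdc)
      omega⟩
  invFun d := ⟨fun i => ⟨(d.1 i : ℕ) - scount G π i.1,
      by have := dbound G π d.1 d.2 i.1 i.2; simp only [Fin.eta] at this; omega⟩, by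
    intro t ht
    have hdlt := Fin.lt_def.mp (d.2 (Fin.mk_lt_mk.mpr (Nat.lt_succ_self t)
      : (⟨t, Nat.lt_of_succ_lt ht⟩ : Fin n) < ⟨t + 1, ht⟩))
    have hb1 := dbound G π d.1 d.2 t (Nat.lt_of_succ_lt ht)
    have hb2 := dbound G π d.1 d.2 (t + 1) ht
    by_cases hw : wkp G π t
    · have hs := scount_succ_of_wkp G π hw
      constructor
      · simp only [Fin.le_def, Fin.val_mk]
        omega
      · intro hdcon
        obtain ⟨_, hndc⟩ := hw
        exact absurd hdcon hndc
    · have hs := scount_succ_of_not_wkp G π hw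
      have hlt : (⟨(d.1 ⟨t, Nat.lt_of_succ_lt ht⟩ : ℕ) - scount G π t,
          by have := dbound G π d.1 d.2 t (Nat.lt_of_succ_lt ht); omega⟩ : Fin k) <
          ⟨(d.1 ⟨t + 1, ht⟩ : ℕ) - scount G π (t + 1),
          by have := dbound G π d.1 d.2 (t + 1) ht; omega⟩ := by
        simp only [Fin.lt_def, Fin.val_mk]
        omega
      exact ⟨le_of_lt hlt, fun _ => hlt⟩⟩
  left_inv c := by
    apply Subtype.ext
    funext i
    apply Fin.ext
    simp only [Fin.val_mk]
    omega
  right_inv d := by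
    apply Subtype.ext
    funext i
    apply Fin.ext
    simp only [Fin.val_mk]
    have := dbound G π d.1 d.2 i.1 i.2
    simp only [Fin.eta] at this
    omega

lemma card_valid (k : ℕ) (π : Equiv.Perm (Fin n)) :
    Nat.card {c : Fin n → Fin k // Valid G k π c} =
      (k + (n - 1 - deltaOrd G.Adj (fun i => π i))).choose n := by
  rw [Nat.card_congr (validEquiv G k π), card_strictMono, scount_top]


/-- decreasing chain of consecutive non-adjacent vertices: endpoints non-adjacent -/
lemma chain_nonadj (hW : WGEmpty G) (w : ℕ → Fin n) :
    ∀ d i, 0 < d →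
    (∀ t, i ≤ t → t < i + d → w (t + 1) < w t ∧ ¬ G.Adj (w t) (w (t + 1))) →
    w (i + d) < w i ∧ ¬ G.Adj (w i) (w (i + d)) := by
  intro d
  induction d with
  | zero => omega
  | succ d ih =>
    intro i _ hch
    rcases Nat.eq_zero_or_pos d with rfl | hd
    · simpa using hch i le_rfl (by omega)
    · have h1 : w (i + 1) < w i ∧ ¬ G.Adj (w i) (w (i + 1)) :=
        hch i le_rfl (by omega)
      have h2 : w (i + 1 + d) < w (i + 1) ∧ ¬ G.Adj (w (i + 1)) (w (i + 1 + d)) :=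
        ih (i + 1) hd (fun t h1t h2t => hch t (by omega) (by omega))
      have he : i + 1 + d = i + (d + 1) := by omega
      rw [he] at h2
      refine ⟨lt_trans h2.1 h1.1, fun hadj => ?_⟩
      exact hW ⟨w (i + (d + 1)), w (i + 1), w i, h2.1, h1.1, hadj.symm,
        fun h => h2.2 h.symm, fun h => h1.2 h.symm⟩

/-- a proper coloring -/
def Proper (k : ℕ) (f : Fin n → Fin k) : Prop := ∀ u v : Fin n, G.Adj u v → f u ≠ f v

/-- the coloring induced by a pair -/
def toCol {n : ℕ} (k : ℕ) (π : Equiv.Perm (Fin n)) (c : Fin n → Fin k) : Fin n → Fin k :=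
  fun v => c (π.symm v)

lemma proper_of_valid (hW : WGEmpty G) {k : ℕ} {π : Equiv.Perm (Fin n)}
    {c : Fin n → Fin k} (hv : Valid G k π c) : Proper G k (toCol k π c) := by
  intro u v hadj hne
  -- positions
  set i := π.symm u with hi
  set j := π.symm v with hj
  have hij : i ≠ j := fun h => (G.ne_of_adj hadj) (by rw [hi, hj] at h; simpa using congrArg π h)
  have hmono : Monotone c := monotone_of_step (fun t ht => (hv t ht).1)
  -- wlog i < j
  have key : ∀ i j : Fin n, i < j → c i = c j → ¬ G.Adj (π i) (π j) := by
    intro i j hlt hc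
    -- c constant on [i, j]
    have hconst : ∀ t, (i : ℕ) ≤ t → (ht : t ≤ (j : ℕ)) → c ⟨t, lt_of_le_of_lt ht j.isLt⟩ = c i := by
      intro t h1 h2
      have e1 : c i ≤ c ⟨t, lt_of_le_of_lt h2 j.isLt⟩ := hmono (by simpa [Fin.le_def] using h1)
      have e2 : c ⟨t, lt_of_le_of_lt h2 j.isLt⟩ ≤ c j := hmono (by simpa [Fin.le_def] using h2)
      exact le_antisymm (e2.trans (le_of_eq hc.symm)) e1
    -- the chain
    have hn : 0 < n := j.pos
    set w : ℕ → Fin n := fun t => π ⟨min t (n - 1), by omega⟩ with hw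
    have hch : ∀ t, (i : ℕ) ≤ t → t < (i : ℕ) + ((j : ℕ) - (i : ℕ)) →
        w (t + 1) < w t ∧ ¬ G.Adj (w t) (w (t + 1)) := by
      intro t h1 h2
      have ht1 : t + 1 < n := by omega
      have hwt : w t = π ⟨t, by omega⟩ := by
        simp only [hw]; congr 1; apply Fin.ext; simp; omega
      have hwt1 : w (t + 1) = π ⟨t + 1, ht1⟩ := by
        simp only [hw]; congr 1; apply Fin.ext; simp; omega
      have hceq : c ⟨t, by omega⟩ = c ⟨t + 1, ht1⟩ := by
        rw [hconst t h1 (by omega), hconst (t+1) (by omega) (by omega)]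
      have hnlt : ¬ c ⟨t, by omega⟩ < c ⟨t + 1, ht1⟩ := by rw [hceq]; exact lt_irrefl _
      have hndc : ¬ dc G (π ⟨t, by omega⟩) (π ⟨t + 1, ht1⟩) := fun h => hnlt ((hv t ht1).2 h)
      rw [dc, not_or] at hndc
      have hne' : π ⟨t, by omega⟩ ≠ π ⟨t + 1, ht1⟩ := by
        intro h
        have := π.injective h
        simp only [Fin.mk.injEq] at this
        omega
      rw [hwt, hwt1]
      exact ⟨lt_of_le_of_ne (not_lt.mp hndc.1) (fun h => hne' h.symm), hndc.2⟩
    have := chain_nonadj G hW w ((j : ℕ) - (i : ℕ)) (i : ℕ)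
      (by have := Fin.lt_def.mp hlt; omega) hch
    have hwi : w (i : ℕ) = π i := by
      simp only [hw]; congr 1; apply Fin.ext; simp; omega
    have hwj : w ((i : ℕ) + ((j : ℕ) - (i : ℕ))) = π j := by
      simp only [hw]; congr 1; apply Fin.ext; simp
      have := Fin.lt_def.mp hlt; omega
    rw [hwi, hwj] at this
    exact this.2
  rcases lt_or_gt_of_ne hij with h | h
  · exact key i j h hne (by simpa [hi, hj] using hadj)
  · exact key j i h hne.symm (by simpa [hi, hj] using hadj.symm)

/-- the sorting key -/
def K {k : ℕ} (f : Fin n → Fin k) : Fin n → Lex (Fin k × Fin n) :=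
  fun v => toLex (f v, v.rev)

lemma K_injective {k : ℕ} (f : Fin n → Fin k) : Function.Injective (K f) := by
  intro u v h
  have h2 : (f u, u.rev) = (f v, v.rev) := by
    have := congrArg ofLex h
    simpa [K] using this
  have := (Prod.mk.injEq _ _ _ _).mp h2
  exact Fin.rev_injective this.2

lemma key_strictMono {k : ℕ} {π : Equiv.Perm (Fin n)} {c : Fin n → Fin k}
    (hv : Valid G k π c) :
    StrictMono (fun i : Fin n => toLex (c i, (π i).rev)) := by
  apply strictMono_of_step
  intro t ht
  rw [Prod.Lex.lt_iff]
  rcases lt_or_eq_of_le (hv t ht).1 with hlt | heq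
  · exact Or.inl hlt
  · refine Or.inr ⟨heq, ?_⟩
    have hndc : ¬ dc G (π ⟨t, Nat.lt_of_succ_lt ht⟩) (π ⟨t + 1, ht⟩) := by
      intro hdc
      exact absurd heq (ne_of_lt ((hv t ht).2 hdc))
    rw [dc, not_or] at hndc
    have hne : π ⟨t, Nat.lt_of_succ_lt ht⟩ ≠ π ⟨t + 1, ht⟩ := by
      intro h
      have := π.injective h
      simp only [Fin.mk.injEq] at this
      omega
    have : π ⟨t + 1, ht⟩ < π ⟨t, Nat.lt_of_succ_lt ht⟩ :=
      lt_of_le_of_ne (not_lt.mp hndc.1) hne.symm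
    exact Fin.rev_lt_rev.mpr this

lemma toCol_apply {k : ℕ} (π : Equiv.Perm (Fin n)) (c : Fin n → Fin k) (i : Fin n) :
    toCol k π c (π i) = c i := by
  simp [toCol]

lemma pairs_injective {k : ℕ} {π π' : Equiv.Perm (Fin n)} {c c' : Fin n → Fin k}
    (hv : Valid G k π c) (hv' : Valid G k π' c')
    (h : toCol k π c = toCol k π' c') : π = π' ∧ c = c' := by
  set f := toCol k π c with hf
  have h1 : (K f) ∘ π = fun i : Fin n => toLex (c i, (π i).rev) := by
    funext i
    simp only [Function.comp, K, hf, toCol_apply]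
  have h1' : (K f) ∘ π' = fun i : Fin n => toLex (c' i, (π' i).rev) := by
    funext i
    simp only [Function.comp, K, h, toCol_apply]
  have hm : Monotone ((K f) ∘ π) := by rw [h1]; exact (key_strictMono G hv).monotone
  have hm' : Monotone ((K f) ∘ π') := by rw [h1']; exact (key_strictMono G hv').monotone
  have heq : (K f) ∘ π = (K f) ∘ π' := Tuple.unique_monotone hm hm'
  have hππ' : π = π' := by
    apply Equiv.ext
    intro i
    exact K_injective f (congrFun heq i)
  refine ⟨hππ', ?_⟩
  funext i
  have : c i = f (π i) := (toCol_apply π c i).symm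
  rw [this, hππ', h, toCol_apply]

lemma pairs_surjective {k : ℕ} {f : Fin n → Fin k} (hf : Proper G k f) :
    ∃ (π : Equiv.Perm (Fin n)) (c : Fin n → Fin k),
      Valid G k π c ∧ toCol k π c = f := by
  classical
  set π := Tuple.sort (K f) with hπ
  refine ⟨π, fun i => f (π i), ?_, ?_⟩
  · have hmono : Monotone ((K f) ∘ π) := Tuple.monotone_sort (K f)
    have hsm : StrictMono ((K f) ∘ π) :=
      hmono.strictMono_of_injective ((K_injective f).comp π.injective)
    intro t ht
    have hlt := hsm (Fin.mk_lt_mk.mpr (Nat.lt_succ_self t)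
      : (⟨t, Nat.lt_of_succ_lt ht⟩ : Fin n) < ⟨t + 1, ht⟩)
    simp only [Function.comp, K, Prod.Lex.lt_iff] at hlt
    rcases hlt with hlt | ⟨heq, hrev⟩
    · exact ⟨le_of_lt hlt, fun _ => hlt⟩
    · refine ⟨le_of_eq heq, fun hdc => ?_⟩
      exfalso
      have hgt : π ⟨t + 1, ht⟩ < π ⟨t, Nat.lt_of_succ_lt ht⟩ := Fin.rev_lt_rev.mp hrev
      rcases hdc with hlt' | hadj
      · exact absurd hlt' (not_lt.mpr (le_of_lt hgt))
      · exact hf _ _ hadj heq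
  · funext v
    simp [toCol]

open Classical in
lemma card_proper_pairs (k : ℕ) :
    properColorings G k =
      Nat.card {p : Equiv.Perm (Fin n) × (Fin n → Fin k) //
        Valid G k p.1 p.2 ∧ Proper G k (toCol k p.1 p.2)} := by
  rw [properColorings]
  apply Nat.card_congr
  symm
  refine Equiv.ofBijective (fun p => ⟨toCol k p.1.1 p.1.2, p.2.2⟩) ⟨?_, ?_⟩
  · rintro ⟨⟨π, c⟩, hv, hp⟩ ⟨⟨π', c'⟩, hv', hp'⟩ h
    have h2 : toCol k π c = toCol k π' c' := congrArg Subtype.val h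
    have := pairs_injective G hv hv' h2
    simp only [Subtype.mk.injEq, Prod.mk.injEq]
    exact this
  · rintro ⟨f, hf⟩
    obtain ⟨π, c, hv, hc⟩ := pairs_surjective G (hf : Proper G k f)
    exact ⟨⟨⟨π, c⟩, hv, by rw [hc]; exact hf⟩, Subtype.ext hc⟩

open Classical in
lemma card_pairs (k : ℕ) :
    Nat.card {p : Equiv.Perm (Fin n) × (Fin n → Fin k) // Valid G k p.1 p.2} =
      ∑ π : Equiv.Perm (Fin n), (k + (n - 1 - deltaOrd G.Adj (fun i => π i))).choose n := by
  rw [Nat.card_congr (Equiv.subtypeProdEquivSigmaSubtype (fun π c => Valid G k π c))]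
  rw [Nat.card_eq_fintype_card, Fintype.card_sigma]
  exact Finset.sum_congr rfl (fun π _ => by rw [← Nat.card_eq_fintype_card, card_valid])

set_option maxHeartbeats 2000000 in
open Classical in
lemma exists_bad (hW : ¬ WGEmpty G) :
    0 < n - 2 ∧ properColorings G (n - 2) ≠
      ∑ π : Equiv.Perm (Fin n),
        ((n - 2) + (n - 1 - deltaOrd G.Adj (fun i => π i))).choose n := by
  rw [WGEmpty] at hW
  push_neg at hW
  obtain ⟨a, b, cc, hab, hbc, hadj, hnab, hnbc⟩ := hW
  have hn3 : 3 ≤ n := by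
    have h1 := Fin.lt_def.mp hab
    have h2 := Fin.lt_def.mp hbc
    have h3 := cc.isLt
    omega
  refine ⟨by omega, ?_⟩
  set k := n - 2 with hk
  -- the key function
  set g : Fin n → ℕ := fun v => if v = cc then 0 else if v = b then 1 else
    if v = a then 2 else (v : ℕ) + 3 with hg
  have hginj : Function.Injective g := by
    intro u v huv
    simp only [hg] at huv
    split_ifs at huv with e1 e2 e3 e4 e5 e6 e7 e8 e9 e10 e11 e12 <;>
      first
        | (subst_vars; rfl)
        | omega
        | (exact Fin.ext (by omega))
  set π := Tuple.sort g with hπ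
  have hsm : StrictMono (g ∘ π) :=
    (Tuple.monotone_sort g).strictMono_of_injective (hginj.comp π.injective)
  have hgcc : g cc = 0 := by simp [hg]
  have hgb : g b = 1 := by
    have : b ≠ cc := ne_of_lt hbc
    simp [hg, this]
  have hga : g a = 2 := by
    have h1 : a ≠ cc := ne_of_lt (lt_trans hab hbc)
    have h2 : a ≠ b := ne_of_lt hab
    simp [hg, h1, h2]
  -- identify first three values of π
  have h0 : π ⟨0, by omega⟩ = cc := by
    obtain ⟨j0, hj0⟩ := π.surjective cc
    have hj : j0 = ⟨0, by omega⟩ := by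
      by_contra hne
      have hlt : (⟨0, by omega⟩ : Fin n) < j0 := by
        rw [Fin.lt_def]
        simp only [Fin.val_mk]
        have : (j0 : ℕ) ≠ 0 := fun h => hne (Fin.ext h)
        omega
      have := hsm hlt
      simp only [Function.comp] at this
      rw [hj0, hgcc] at this
      omega
    rw [← hj, hj0]
  have h1 : π ⟨1, by omega⟩ = b := by
    obtain ⟨j1, hj1⟩ := π.surjective b
    have hne0 : (j1 : ℕ) ≠ 0 := by
      intro h
      have : j1 = ⟨0, by omega⟩ := Fin.ext h
      rw [this, h0] at hj1
      exact absurd hj1.symm (ne_of_lt hbc)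
    have hj : j1 = ⟨1, by omega⟩ := by
      by_contra hne
      have hne1 : (j1 : ℕ) ≠ 1 := fun h => hne (Fin.ext h)
      have hlt : (⟨1, by omega⟩ : Fin n) < j1 := by
        rw [Fin.lt_def]; simp only [Fin.val_mk]; omega
      have hlt0 : (⟨0, by omega⟩ : Fin n) < (⟨1, by omega⟩ : Fin n) := by
        rw [Fin.lt_def]; simp only [Fin.val_mk]; omega
      have t1 := hsm hlt
      have t0 := hsm hlt0
      simp only [Function.comp] at t1 t0
      rw [hj1, hgb] at t1
      rw [h0, hgcc] at t0
      omega
    rw [← hj, hj1]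
  have h2 : π ⟨2, by omega⟩ = a := by
    obtain ⟨j2, hj2⟩ := π.surjective a
    have hne0 : (j2 : ℕ) ≠ 0 := by
      intro h
      have : j2 = ⟨0, by omega⟩ := Fin.ext h
      rw [this, h0] at hj2
      exact absurd hj2.symm (ne_of_lt (lt_trans hab hbc))
    have hne1 : (j2 : ℕ) ≠ 1 := by
      intro h
      have : j2 = ⟨1, by omega⟩ := Fin.ext h
      rw [this, h1] at hj2
      exact absurd hj2.symm (ne_of_lt hab)
    have hj : j2 = ⟨2, by omega⟩ := by
      by_contra hne
      have hne2 : (j2 : ℕ) ≠ 2 := fun h => hne (Fin.ext h)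
      have hlt : (⟨2, by omega⟩ : Fin n) < j2 := by
        rw [Fin.lt_def]; simp only [Fin.val_mk]; omega
      have hlt1 : (⟨1, by omega⟩ : Fin n) < (⟨2, by omega⟩ : Fin n) := by
        rw [Fin.lt_def]; simp only [Fin.val_mk]; omega
      have t2 := hsm hlt
      have t1 := hsm hlt1
      simp only [Function.comp] at t2 t1
      rw [hj2, hga] at t2
      rw [h1, hgb] at t1
      omega
    rw [← hj, hj2]
  clear hginj hsm hgcc hgb hga hπ hg
  clear_value π g
  -- the coloring sequence
  set c : Fin n → Fin k := fun i => ⟨(i : ℕ) - 2, by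
    have := i.isLt; omega⟩ with hc
  have hvalid : Valid G k π c := by
    intro t ht
    match t with
    | 0 =>
      constructor
      · exact Fin.mk_le_mk.mpr (by simp only [Fin.val_mk]; omega)
      · intro hdc
        exfalso
        have e1 : π ⟨0, Nat.lt_of_succ_lt ht⟩ = cc := h0
        have e2 : π ⟨0 + 1, ht⟩ = b := h1
        rw [e1, e2] at hdc
        rcases hdc with h | h
        · exact absurd h (not_lt.mpr (le_of_lt hbc))
        · exact hnbc h.symm
    | 1 =>
      constructor
      · exact Fin.mk_le_mk.mpr (by simp only [Fin.val_mk]; omega)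
      · intro hdc
        exfalso
        have e1 : π ⟨1, Nat.lt_of_succ_lt ht⟩ = b := h1
        have e2 : π ⟨1 + 1, ht⟩ = a := h2
        rw [e1, e2] at hdc
        rcases hdc with h | h
        · exact absurd h (not_lt.mpr (le_of_lt hab))
        · exact hnab h.symm
    | (t + 2) =>
      have hlt : c ⟨t + 2, Nat.lt_of_succ_lt ht⟩ < c ⟨t + 2 + 1, ht⟩ :=
        Fin.mk_lt_mk.mpr (by simp only [Fin.val_mk]; omega)
      exact ⟨le_of_lt hlt, fun _ => hlt⟩
  -- the induced coloring is improper
  have himp : ¬ Proper G k (toCol k π c) := by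
    intro hp
    have hsa : π.symm a = ⟨2, by omega⟩ := (Equiv.symm_apply_eq π).mpr h2.symm
    have hscc : π.symm cc = ⟨0, by omega⟩ := (Equiv.symm_apply_eq π).mpr h0.symm
    have : toCol k π c a = toCol k π c cc := by
      simp only [toCol, hsa, hscc, hc]
    exact hp a cc hadj this
  -- conclude
  clear h0 h1 h2 hc
  clear_value c
  rw [card_proper_pairs, ← card_pairs]
  have hlt : Nat.card {p : Equiv.Perm (Fin n) × (Fin n → Fin k) //
      Valid G k p.1 p.2 ∧ Proper G k (toCol k p.1 p.2)} <
      Nat.card {p : Equiv.Perm (Fin n) × (Fin n → Fin k) // Valid G k p.1 p.2} := by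
    rw [Nat.card_congr (Equiv.subtypeSubtypeEquivSubtypeInter
      (fun p : Equiv.Perm (Fin n) × (Fin n → Fin k) => Valid G k p.1 p.2)
      (fun p => Proper G k (toCol k p.1 p.2))).symm]
    rw [Nat.card_eq_fintype_card, Nat.card_eq_fintype_card]
    exact Fintype.card_subtype_lt (x := ⟨(π, c), hvalid⟩) (by exact himp)
  omega

lemma count_eq_of_WEmpty (hW : WGEmpty G) (k : ℕ) :
    properColorings G k = ∑ π : Equiv.Perm (Fin n),
      (k + (n - 1 - deltaOrd G.Adj (fun i => π i))).choose n := by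
  rw [card_proper_pairs, ← card_pairs]
  exact Nat.card_congr (Equiv.subtypeEquivRight (fun p =>
    ⟨fun h => h.1, fun h => ⟨h, proper_of_valid G hW h⟩⟩))

open Polynomial in
open Classical in
noncomputable def QP (G : SimpleGraph (Fin n)) : Polynomial ℚ :=
  (n.factorial : ℚ)⁻¹ • ∑ π : Equiv.Perm (Fin n),
    (descPochhammer ℚ n).comp (X + C (deltaOrd G.Adj (fun i => π i) : ℚ))

open Polynomial in
lemma QP_eval_nat (m : ℕ) : (QP G).eval (m : ℚ) = (PsiGAt G m : ℚ) := by
  rw [QP, PsiGAt]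
  rw [Polynomial.eval_smul, Polynomial.eval_finset_sum]
  have h : ∀ π : Equiv.Perm (Fin n),
      ((descPochhammer ℚ n).comp (X + C (deltaOrd G.Adj (fun i => π i) : ℚ))).eval (m : ℚ)
        = (n.factorial : ℚ) * ((m + deltaOrd G.Adj (fun i => π i)).choose n : ℚ) := by
    intro π
    rw [Polynomial.eval_comp, Polynomial.eval_add, Polynomial.eval_X, Polynomial.eval_C]
    have hc : (m : ℚ) + (deltaOrd G.Adj (fun i => π i) : ℚ)
        = ((m + deltaOrd G.Adj (fun i => π i) : ℕ) : ℚ) := by push_cast; ring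
    rw [hc, descPochhammer_eval_eq_descFactorial, Nat.descFactorial_eq_factorial_mul_choose]
    push_cast; ring
  rw [Finset.sum_congr rfl (fun π _ => h π), ← Finset.mul_sum, smul_eq_mul, ← mul_assoc,
    inv_mul_cancel₀ (by positivity : (n.factorial : ℚ) ≠ 0), one_mul]
  push_cast
  rfl

open Polynomial in
lemma QP_eval_neg (k : ℕ) :
    (-1 : ℚ) ^ n * (QP G).eval (-(k : ℚ)) =
      ((∑ π : Equiv.Perm (Fin n),
        (k + (n - 1 - deltaOrd G.Adj (fun i => π i))).choose n : ℕ) : ℚ) := by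
  rcases Nat.eq_zero_or_pos n with rfl | hn
  · simp [QP]
  rw [QP]
  rw [Polynomial.eval_smul, Polynomial.eval_finset_sum]
  have h : ∀ π : Equiv.Perm (Fin n),
      ((descPochhammer ℚ n).comp (X + C (deltaOrd G.Adj (fun i => π i) : ℚ))).eval (-(k : ℚ))
        = (-1 : ℚ) ^ n * ((n.factorial : ℚ) *
            (((k + (n - 1 - deltaOrd G.Adj (fun i => π i))).choose n : ℕ) : ℚ)) := by
    intro π
    set δ := deltaOrd G.Adj (fun i => π i) with hδ
    have hδle : δ ≤ n - 1 := deltaOrd_le G π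
    rw [Polynomial.eval_comp, Polynomial.eval_add, Polynomial.eval_X, Polynomial.eval_C]
    rw [descPochhammer_eval_eq_ascPochhammer]
    have e1 : -(k : ℚ) + (δ : ℚ) - (n : ℚ) + 1 = -(((k + (n - 1 - δ) : ℕ) : ℚ)) := by
      have h1 : ((n - 1 - δ : ℕ) : ℚ) = (n : ℚ) - 1 - (δ : ℚ) := by
        have : ((n - 1 - δ : ℕ) : ℚ) = ((n : ℕ) : ℚ) - ((1 : ℕ) : ℚ) - ((δ : ℕ) : ℚ) := by
          rw [Nat.cast_sub (by omega), Nat.cast_sub (by omega)]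
        simpa using this
      push_cast [h1]
      ring
    rw [e1, ascPochhammer_eval_neg_eq_descPochhammer, descPochhammer_eval_eq_descFactorial,
      Nat.descFactorial_eq_factorial_mul_choose]
    push_cast
    ring
  rw [Finset.sum_congr rfl (fun π _ => h π), ← Finset.mul_sum, ← Finset.mul_sum, smul_eq_mul]
  rw [Nat.cast_sum]
  set Sc : ℚ := ∑ x : Equiv.Perm (Fin n),
    (((k + (n - 1 - deltaOrd G.Adj fun i => x i)).choose n : ℕ) : ℚ) with hSc
  have h2 : (-1 : ℚ) ^ n * (-1) ^ n = 1 := by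
    rw [← pow_add]; exact Even.neg_one_pow ⟨n, by ring⟩
  have h3 : (n.factorial : ℚ) ≠ 0 := by positivity
  calc (-1 : ℚ) ^ n * ((n.factorial : ℚ)⁻¹ * ((-1) ^ n * ((n.factorial : ℚ) * Sc)))
      = ((-1 : ℚ) ^ n * (-1) ^ n) * (((n.factorial : ℚ)⁻¹ * (n.factorial : ℚ)) * Sc) := by
        ring
    _ = Sc := by rw [h2, inv_mul_cancel₀ h3, one_mul, one_mul]

end CR

/-- Theorem 1.1: let `G = ([n], E)` be a simple graph with
chromatic polynomial `χ(G, x)` (the polynomial whose value at every positive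
integer `k` is the number of proper `k`-colorings).  Then
`(-1)^n χ(G, -x) = Σ_π C(x + δ_G(π), n)` (as an identity of polynomials,
i.e. at every positive integer `x = m`), where the sum runs over all `n!`
orderings of `[n]`, if and only if `W(G) = ∅`. -/
theorem chromatic_reciprocity_iff_WEmpty {n : ℕ} (G : SimpleGraph (Fin n))
    (P : Polynomial ℚ)
    (hP : ∀ k : ℕ, 0 < k → P.eval (k : ℚ) = properColorings G k) :
    (∀ m : ℕ, 0 < m →
        (-1 : ℚ) ^ n * P.eval (-(m : ℚ)) = (PsiGAt G m : ℚ)) ↔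
      WGEmpty G := by
  have hinf : ∀ p q : Polynomial ℚ,
      (∀ k : ℕ, 0 < k → p.eval (k : ℚ) = q.eval (k : ℚ)) → p = q := by
    intro p q hpq
    apply Polynomial.eq_of_infinite_eval_eq
    apply Set.infinite_of_injective_forall_mem (f := fun m : ℕ => ((m + 1 : ℕ) : ℚ))
    · intro x y hxy
      simpa using hxy
    · intro m
      exact hpq (m + 1) (Nat.succ_pos m)
  have hee : (-1 : ℚ) ^ n * (-1) ^ n = 1 := by
    rw [← pow_add]; exact Even.neg_one_pow ⟨n, by ring⟩
  constructor
  · intro H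
    by_contra hW
    obtain ⟨hk, hne⟩ := CR.exists_bad G hW
    apply hne
    have hPQ : Polynomial.C ((-1 : ℚ) ^ n) * P.comp (-Polynomial.X) = CR.QP G := by
      apply hinf
      intro m hm
      rw [Polynomial.eval_mul, Polynomial.eval_C, Polynomial.eval_comp, Polynomial.eval_neg,
        Polynomial.eval_X]
      rw [H m hm, CR.QP_eval_nat]
    have key : ∀ k : ℕ, 0 < k → (properColorings G k : ℚ) =
        ((∑ π : Equiv.Perm (Fin n),
          (k + (n - 1 - deltaOrd G.Adj (fun i => π i))).choose n : ℕ) : ℚ) := by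
      intro k hk0
      have h1 := congrArg (Polynomial.eval (-(k : ℚ))) hPQ
      rw [Polynomial.eval_mul, Polynomial.eval_C, Polynomial.eval_comp, Polynomial.eval_neg,
        Polynomial.eval_X, neg_neg] at h1
      have h2 := CR.QP_eval_neg G k
      rw [← h1, ← mul_assoc, hee, one_mul] at h2
      rw [← hP k hk0, h2]
    exact_mod_cast key (n - 2) hk
  · intro hW m hm
    have key : ∀ k : ℕ, 0 < k → P.eval (k : ℚ) =
        ((∑ π : Equiv.Perm (Fin n),
          (k + (n - 1 - deltaOrd G.Adj (fun i => π i))).choose n : ℕ) : ℚ) := by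
      intro k hk
      rw [hP k hk, CR.count_eq_of_WEmpty G hW]
    have hPS : P = Polynomial.C ((-1 : ℚ) ^ n) * (CR.QP G).comp (-Polynomial.X) := by
      apply hinf
      intro k hk
      rw [Polynomial.eval_mul, Polynomial.eval_C, Polynomial.eval_comp, Polynomial.eval_neg,
        Polynomial.eval_X]
      rw [key k hk, ← CR.QP_eval_neg G k]
    rw [hPS, Polynomial.eval_mul, Polynomial.eval_C, Polynomial.eval_comp, Polynomial.eval_neg,
      Polynomial.eval_X, neg_neg, ← mul_assoc, hee, one_mul]
    exact CR.QP_eval_nat G m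
end

section
/- For a simple graph G = ([n], E), Ψ(G, x) = Σ_{D ∈ AO(G)} Ψ(D, x), where AO(G) is the set of acyclic orientations of G. -/
open Classical in
/-- `Ψ(D, m) = Σ_{π ∈ OP(D)} C(m + δ_D(π), n)` for a digraph `D` on `[n]`. -/
noncomputable def PsiDAt {n : ℕ} (A : Fin n → Fin n → Prop) (m : ℕ) : ℕ :=
  ∑ π ∈ Finset.univ.filter
      (fun π : Equiv.Perm (Fin n) => DRespects A (fun i => π i)),
    (m + deltaOrd A (fun i => π i)).choose n

/-- `A` is an orientation of the simple graph `G`. -/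
def IsOrientation {V : Type*} (G : SimpleGraph V) (A : V → V → Prop) : Prop :=
  (∀ u v : V, A u v → G.Adj u v) ∧
  (∀ u v : V, G.Adj u v → A u v ∨ A v u) ∧
  (∀ u v : V, ¬ (A u v ∧ A v u))


open Classical in
noncomputable def Aof {n : ℕ} (G : SimpleGraph (Fin n)) (π : Equiv.Perm (Fin n)) :
    Fin n → Fin n → Bool :=
  fun a b => decide (G.Adj a b ∧ π.symm a < π.symm b)

lemma Aof_iff {n : ℕ} (G : SimpleGraph (Fin n)) (π : Equiv.Perm (Fin n)) (a b : Fin n) :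
    Aof G π a b = true ↔ G.Adj a b ∧ π.symm a < π.symm b := by
  simp [Aof]

lemma Aof_orient {n : ℕ} (G : SimpleGraph (Fin n)) (π : Equiv.Perm (Fin n)) :
    IsOrientation G (fun a b => Aof G π a b = true) := by
  refine ⟨fun u v h => ((Aof_iff G π u v).1 h).1, fun u v h => ?_, fun u v h => ?_⟩
  · rcases lt_trichotomy (π.symm u) (π.symm v) with hlt | heq | hgt
    · exact Or.inl ((Aof_iff G π u v).2 ⟨h, hlt⟩)
    · exact absurd (π.symm.injective heq) h.ne
    · exact Or.inr ((Aof_iff G π v u).2 ⟨h.symm, hgt⟩)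
  · exact absurd (((Aof_iff G π u v).1 h.1).2.trans ((Aof_iff G π v u).1 h.2).2) (lt_irrefl _)

lemma Aof_acyclic {n : ℕ} (G : SimpleGraph (Fin n)) (π : Equiv.Perm (Fin n)) (v : Fin n) :
    ¬ Relation.TransGen (fun a b => Aof G π a b = true) v v := by
  intro h
  have h2 : Relation.TransGen (fun a b : Fin n => π.symm a < π.symm b) v v :=
    Relation.TransGen.mono (fun a b hab => ((Aof_iff G π a b).1 hab).2) _ _ h
  have ht : Transitive (fun a b : Fin n => π.symm a < π.symm b) := fun a b c => lt_trans
  rw [@Relation.transGen_eq_self _ _ ⟨ht⟩] at h2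
  exact lt_irrefl _ h2

lemma Aof_respects {n : ℕ} (G : SimpleGraph (Fin n)) (π : Equiv.Perm (Fin n)) :
    DRespects (fun a b => Aof G π a b = true) (fun i => π i) := by
  intro i j h
  have := ((Aof_iff G π (π i) (π j)).1 h).2
  simpa using this

lemma Aof_unique {n : ℕ} (G : SimpleGraph (Fin n)) (π : Equiv.Perm (Fin n))
    (A : Fin n → Fin n → Bool) (hor : IsOrientation G (fun a b => A a b = true))
    (hresp : DRespects (fun a b => A a b = true) (fun i => π i)) :
    A = Aof G π := by
  funext a b
  have key : A a b = true ↔ Aof G π a b = true := by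
    rw [Aof_iff]
    constructor
    · intro h
      refine ⟨hor.1 a b h, ?_⟩
      have := hresp (π.symm a) (π.symm b)
      simp only [Equiv.apply_symm_apply] at this
      exact this h
    · rintro ⟨hadj, hlt⟩
      rcases hor.2.1 a b hadj with h | h
      · exact h
      · have := hresp (π.symm b) (π.symm a)
        simp only [Equiv.apply_symm_apply] at this
        exact absurd (this h) (asymm hlt)
  cases hA : A a b <;> cases hB : Aof G π a b <;> simp_all

lemma delta_Aof {n : ℕ} (G : SimpleGraph (Fin n)) (π : Equiv.Perm (Fin n)) :
    deltaOrd (fun a b => Aof G π a b = true) (fun i => π i) =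
      deltaOrd G.Adj (fun i => π i) := by
  unfold deltaOrd
  congr 1
  ext i
  simp only [Finset.mem_filter, Finset.mem_range]
  refine and_congr_right fun hi => ?_
  constructor
  · rintro ⟨h, hc⟩
    refine ⟨h, ?_⟩
    rcases hc with hc | hc
    · exact Or.inl hc
    · exact Or.inr ((Aof_iff G π _ _).1 hc).1
  · rintro ⟨h, hc⟩
    refine ⟨h, ?_⟩
    rcases hc with hc | hc
    · exact Or.inl hc
    · refine Or.inr ((Aof_iff G π _ _).2 ⟨hc, ?_⟩)
      simp only [Equiv.symm_apply_apply]
      exact Fin.mk_lt_mk.2 (Nat.lt_succ_self i)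

open Classical in
/-- Lemma 4.2: for a simple graph `G = ([n], E)`,
`Ψ(G, x) = Σ_{D ∈ AO(G)} Ψ(D, x)`, the sum running over all acyclic
orientations `D` of `G` (stated at every value `x = m ∈ ℕ`). -/
theorem PsiG_eq_sum_PsiD {n : ℕ} (G : SimpleGraph (Fin n)) (m : ℕ) :
    PsiGAt G m =
      ∑ A ∈ Finset.univ.filter
          (fun A : Fin n → Fin n → Bool =>
            IsOrientation G (fun a b => A a b = true) ∧
            ∀ v, ¬ Relation.TransGen (fun a b => A a b = true) v v),
        PsiDAt (fun a b => A a b = true) m := by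
  classical
  symm
  simp only [PsiDAt]
  refine (Finset.sum_congr rfl fun A _ => Finset.sum_filter _ _).trans ?_
  rw [Finset.sum_comm]
  unfold PsiGAt
  refine Finset.sum_congr rfl fun π _ => ?_
  rw [Finset.sum_eq_single_of_mem (Aof G π)
    (Finset.mem_filter.2 ⟨Finset.mem_univ _, Aof_orient G π, Aof_acyclic G π⟩)]
  · rw [if_pos (Aof_respects G π), delta_Aof]
  · intro A hA hne
    rw [if_neg]
    intro hresp
    exact hne (Aof_unique G π A (Finset.mem_filter.1 hA).2.1 hresp)
end

section
/- Let G = ([n], E) be a simple graph and u ∈ {1, n}. Suppose that for every v adjacent to u, every vertex w strictly between u and v (i.e. min{u,v} < w < max{u,v}) lies in N_G(u) ∪ N_G(v). Then W(G) = ∅ if and only if W(G − u) = ∅. -/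
/-- Proposition 5.3: let `G = ([n], E)` and let `u ∈ {1, n}`
(i.e. `u` is the least or the greatest vertex).  If for every `v` adjacent to
`u`, every `w` with `min{u,v} < w < max{u,v}` lies in `N_G(u) ∪ N_G(v)`,
then `W(G) = ∅` iff `W(G − u) = ∅` (the latter meaning no such triple avoids
`u`, with the order inherited from `[n]`). -/
theorem WGEmpty_iff_WGEmpty_erase {n : ℕ} (G : SimpleGraph (Fin n)) (u : Fin n)
    (hu : (∀ v : Fin n, u ≤ v) ∨ (∀ v : Fin n, v ≤ u))
    (hnbr : ∀ v : Fin n, G.Adj u v →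
      ∀ w : Fin n, min u v < w → w < max u v → G.Adj u w ∨ G.Adj v w) :
    WGEmpty G ↔
      ¬ ∃ a b c : Fin n, a ≠ u ∧ b ≠ u ∧ c ≠ u ∧ a < b ∧ b < c ∧
        G.Adj a c ∧ ¬ G.Adj a b ∧ ¬ G.Adj b c := by
  constructor
  · intro h hex
    obtain ⟨a, b, c, _, _, _, hab, hbc, hac, h1, h2⟩ := hex
    exact h ⟨a, b, c, hab, hbc, hac, h1, h2⟩
  · intro h hex
    obtain ⟨a, b, c, hab, hbc, hac, h1, h2⟩ := hex
    rcases hu with hmin | hmax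
    · -- u is minimal; if the triple avoids u we're done, otherwise a = u
      by_cases ha : a = u
      · subst ha
        have := hnbr c hac b (by simpa [min_eq_left (hmin c)] using hab)
          (by simpa [max_eq_right (hmin c)] using hbc)
        rcases this with h' | h'
        · exact h1 h'
        · exact h2 h'.symm
      · have hb : b ≠ u := fun hb => ha (le_antisymm (hb ▸ hab.le) (hmin a))
        have hc : c ≠ u := fun hc => ha (le_antisymm (hc ▸ (hab.trans hbc).le) (hmin a))
        exact h ⟨a, b, c, ha, hb, hc, hab, hbc, hac, h1, h2⟩
    · by_cases hc : c = u
      · subst hc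
        have := hnbr a hac.symm b (by simpa [min_eq_right (hmax a)] using hab)
          (by simpa [max_eq_left (hmax a)] using hbc)
        rcases this with h' | h'
        · exact h2 h'.symm
        · exact h1 h'
      · have hb : b ≠ u := fun hb => hc (le_antisymm (hmax c) (hb ▸ hbc.le))
        have ha : a ≠ u := fun ha => hc (le_antisymm (hmax c) (ha ▸ (hab.trans hbc).le))
        exact h ⟨a, b, c, ha, hb, hc, hab, hbc, hac, h1, h2⟩
end

section
/- Let D = (V, A) be a finite acyclic digraph and S ⊆ V an ideal set in D. Then W(D) = W(D − S), where D − S is the induced subdigraph on V \ S. -/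
/-- The set `W(D)` of triples `a < b < c` with `(c, a)` an arc, `a ≉_D b`
and `c ≉_D b`, for a digraph with arc relation `A`. -/
def WSet (A : ℕ → ℕ → Prop) : Set (ℕ × ℕ × ℕ) :=
  {p | p.1 < p.2.1 ∧ p.2.1 < p.2.2 ∧ A p.2.2 p.1 ∧
    ¬ Relation.TransGen A p.1 p.2.1 ∧ ¬ Relation.TransGen A p.2.1 p.1 ∧
    ¬ Relation.TransGen A p.2.1 p.2.2 ∧ ¬ Relation.TransGen A p.2.2 p.2.1}

/-- `S` is ideal in the digraph `D = (V, A)`: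
(i) `S` is closed under taking directed paths out of its elements;
(ii) every `y ∈ S` satisfies `F_D(y) = ∅` or `y < min F_D(y)`;
(iii) either `S = V` and `min V ≥ 2`, or `min S ≥ 2 + max (V \ S)`. -/
def IsIdeal (V : Finset ℕ) (A : ℕ → ℕ → Prop) (S : Finset ℕ) : Prop :=
  S = ∅ ∨
    ((∀ y ∈ S, ∀ v : ℕ, Relation.TransGen A y v → v ∈ S) ∧
     (∀ y ∈ S, ∀ v : ℕ, A y v → y < v) ∧
     (S = V → ∀ v ∈ V, 2 ≤ v) ∧
     (S ≠ V → ∀ s ∈ S, ∀ v ∈ V, v ∉ S → v + 2 ≤ s))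

lemma transGen_conv (A : ℕ → ℕ → Prop) (S : Finset ℕ)
    (hcl : ∀ y ∈ S, ∀ v, Relation.TransGen A y v → v ∈ S) {x y : ℕ} (hy : y ∉ S)
    (h : Relation.TransGen A x y) :
    Relation.TransGen (fun u v => A u v ∧ u ∉ S ∧ v ∉ S) x y := by
  induction h using Relation.TransGen.head_induction_on with
  | single hxy => exact .single ⟨hxy, fun hx => hy (hcl _ hx _ (.single hxy)), hy⟩
  | head hxz hzy ih =>
    exact .head ⟨hxz, fun hx => hy (hcl _ hx _ (.head hxz hzy)),
      fun hz => hy (hcl _ hz _ hzy)⟩ ih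

/-- Proposition 3.10: for a finite acyclic digraph
`D = (V, A)` with `V ⊂ ℤ⁺` and an ideal set `S ⊆ V`,
`W(D) = W(D − S)`, where `D − S` is the induced subdigraph on `V \ S`. -/
theorem WSet_eq_WSet_sdiff (V : Finset ℕ) (hpos : ∀ v ∈ V, 0 < v)
    (A : ℕ → ℕ → Prop) (harc : ∀ u v : ℕ, A u v → u ∈ V ∧ v ∈ V)
    (hacyc : ∀ v, ¬ Relation.TransGen A v v)
    (S : Finset ℕ) (hSV : S ⊆ V) (hS : IsIdeal V A S) :
    WSet A = WSet (fun u v => A u v ∧ u ∉ S ∧ v ∉ S) := by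
  have memV : ∀ x y : ℕ, Relation.TransGen A x y → y ∈ V := by
    intro x y h
    induction h with
    | single h => exact (harc _ _ h).2
    | tail _ h _ => exact (harc _ _ h).2
  rcases hS with rfl | ⟨hcl, hlt, _, hpart⟩
  · have : (fun u v => A u v ∧ u ∉ (∅ : Finset ℕ) ∧ v ∉ (∅ : Finset ℕ)) = A := by
      funext u v; simp
    rw [this]
  · ext ⟨a, b, c⟩
    simp only [WSet, Set.mem_setOf_eq]
    constructor
    · rintro ⟨hab, hbc, hca, h1, h2, h3, h4⟩
      have hcV := (harc _ _ hca).1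
      have haV := (harc _ _ hca).2
      have hcS : c ∉ S := fun hc => absurd (hlt c hc a hca) (by omega)
      have hSne : S ≠ V := fun h => hcS (h ▸ hcV)
      have haS : a ∉ S := fun ha => absurd (hpart hSne a ha c hcV hcS) (by omega)
      exact ⟨hab, hbc, ⟨hca, hcS, haS⟩,
        fun h => h1 (Relation.TransGen.mono (fun _ _ hp => hp.1) _ _ h),
        fun h => h2 (Relation.TransGen.mono (fun _ _ hp => hp.1) _ _ h),
        fun h => h3 (Relation.TransGen.mono (fun _ _ hp => hp.1) _ _ h),
        fun h => h4 (Relation.TransGen.mono (fun _ _ hp => hp.1) _ _ h)⟩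
    · rintro ⟨hab, hbc, ⟨hca, hcS, haS⟩, h1, h2, h3, h4⟩
      have hcV := (harc _ _ hca).1
      have hSne : S ≠ V := fun h => hcS (h ▸ hcV)
      have hbS : b ∈ V → b ∉ S := fun hbV hbS =>
        absurd (hpart hSne b hbS c hcV hcS) (by omega)
      refine ⟨hab, hbc, hca, ?_, ?_, ?_, ?_⟩
      · exact fun h => h1 (transGen_conv A S hcl (hbS (memV _ _ h)) h)
      · exact fun h => h2 (transGen_conv A S hcl haS h)
      · exact fun h => h3 (transGen_conv A S hcl hcS h)
      · exact fun h => h4 (transGen_conv A S hcl (hbS (memV _ _ h)) h)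
end

section
/- Let D = (V, A) be a finite acyclic digraph with V ⊂ ℤ⁺, let a ∈ V be a turning vertex, and let r ∈ ℤ⁺ \ V satisfy r > max P_D(a), and additionally r < min F_D(a) if F_D(a) ≠ ∅. Then no element of W(D_{a→r}) contains r; consequently W(D_{a→r}) = W(D − a). -/
/-- `p ∈ P_D(u) = B_D[u] ∪ {c : ∃ b < c, (c, b) ∈ A}`. -/
def MemPD (A : ℕ → ℕ → Prop) (u p : ℕ) : Prop :=
  (A p u ∨ p = u) ∨ ∃ b : ℕ, b < p ∧ A p b

/-- `u` is a turning vertex of `D`: `F_D(u) = ∅` or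
`min F_D(u) ≥ 2 + max P_D(u)`. -/
def IsTurning (A : ℕ → ℕ → Prop) (u : ℕ) : Prop :=
  (∀ v, ¬ A u v) ∨ (∀ v, A u v → ∀ p, MemPD A u p → p + 2 ≤ v)

/-- The digraph `D_{a→r}` obtained from `D` by relabeling vertex `a` as `r`. -/
def Relabel (A : ℕ → ℕ → Prop) (a r : ℕ) : ℕ → ℕ → Prop :=
  fun u v => A (if u = r then a else u) (if v = r then a else v) ∧ u ≠ a ∧ v ≠ a

/-- Lemma 3.4: let `D = (V, A)` be a finite acyclic digraph
with `V ⊂ ℤ⁺`, let `a ∈ V` be a turning vertex, and let `r ∈ ℤ⁺ \ V` satisfy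
`r > max P_D(a)` and, when `F_D(a) ≠ ∅`, also `r < min F_D(a)`.  Then no
member of `W(D_{a→r})` contains `r`; consequently `W(D_{a→r}) = W(D − a)`. -/
theorem WSet_relabel (V : Finset ℕ) (hpos : ∀ v ∈ V, 0 < v)
    (A : ℕ → ℕ → Prop) (harc : ∀ u v : ℕ, A u v → u ∈ V ∧ v ∈ V)
    (hacyc : ∀ v, ¬ Relation.TransGen A v v)
    (a : ℕ) (ha : a ∈ V) (hturn : IsTurning A a)
    (r : ℕ) (hr : 0 < r) (hrV : r ∉ V)
    (hrP : ∀ p, MemPD A a p → p < r)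
    (hrF : (∃ v, A a v) → ∀ v, A a v → r < v) :
    (∀ p ∈ WSet (Relabel A a r), p.1 ≠ r ∧ p.2.1 ≠ r ∧ p.2.2 ≠ r) ∧
      WSet (Relabel A a r) = WSet (fun u v => A u v ∧ u ≠ a ∧ v ≠ a) := by
  have hdown : ∀ u v, A u v → v < u → u < r := fun u v h hlt =>
    hrP u (Or.inr ⟨v, hlt, h⟩)
  have L1 : ∀ u v, Relation.TransGen A u v → v < r → u ≠ a → v ≠ a →
      Relation.TransGen (fun u v => A u v ∧ u ≠ a ∧ v ≠ a) u v := by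
    intro u v h
    induction h with
    | single h' => intro hvr hua hva; exact .single ⟨h', hua, hva⟩
    | tail hub h' ih =>
      rename_i b c
      intro hvr hua hva
      have hbne : b ≠ a := by
        rintro rfl
        exact absurd hvr (not_lt.2 (le_of_lt (hrF ⟨c, h'⟩ c h')))
      have hbr : b < r := by
        rcases lt_trichotomy b c with hlt | heq | hgt
        · omega
        · exact absurd (Relation.TransGen.single (heq ▸ h')) (hacyc c)
        · exact hdown b c h' hgt
      exact (ih hbr hua hbne).tail ⟨h', hbne, hva⟩
  have mono1 : ∀ u v, (A u v ∧ u ≠ a ∧ v ≠ a) → Relabel A a r u v := by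
    rintro u v ⟨h, hu, hv⟩
    have h2 := harc u v h
    have hur : u ≠ r := fun e => hrV (e ▸ h2.1)
    have hvr : v ≠ r := fun e => hrV (e ▸ h2.2)
    exact ⟨by rw [if_neg hur, if_neg hvr]; exact h, hu, hv⟩
  have L3a : ∀ u v, Relation.TransGen (Relabel A a r) u v →
      Relation.TransGen A (if u = r then a else u) (if v = r then a else v) := by
    intro u v h
    induction h with
    | single h' => exact .single h'.1
    | tail _ h' ih => exact ih.tail h'.1
  have relnA : ∀ u v, Relation.TransGen (Relabel A a r) u v → u ≠ a ∧ v ≠ a := by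
    intro u v h
    induction h with
    | single h' => exact ⟨h'.2.1, h'.2.2⟩
    | tail _ h' ih => exact ⟨ih.1, h'.2.2⟩
  have part1 : ∀ p ∈ WSet (Relabel A a r), p.1 ≠ r ∧ p.2.1 ≠ r ∧ p.2.2 ≠ r := by
    rintro ⟨x, y, z⟩ hmem
    simp only [WSet, Relabel, Set.mem_setOf_eq] at hmem
    obtain ⟨h1, h2, ⟨hA, hz, hx⟩, -, -, -, -⟩ := hmem
    show x ≠ r ∧ y ≠ r ∧ z ≠ r
    refine ⟨?_, ?_, ?_⟩
    · intro heq
      rw [if_neg (show z ≠ r by omega), if_pos heq] at hA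
      have := hrP z (Or.inl (Or.inl hA))
      omega
    · intro heq
      rw [if_neg (show z ≠ r by omega), if_neg (show x ≠ r by omega)] at hA
      have := hdown z x hA (by omega)
      omega
    · intro heq
      rw [if_pos heq, if_neg (show x ≠ r by omega)] at hA
      have := hrF ⟨x, hA⟩ x hA
      omega
  have key : ∀ u v, u ≠ r → v ≠ r → v < r →
      ¬ Relation.TransGen (fun u v => A u v ∧ u ≠ a ∧ v ≠ a) u v →
      ¬ Relation.TransGen (Relabel A a r) u v := by
    intro u v hur hvr hvlt hn h
    obtain ⟨hua, hva⟩ := relnA u v h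
    have hA := L3a u v h
    rw [if_neg hur, if_neg hvr] at hA
    exact hn (L1 u v hA hvlt hua hva)
  refine ⟨part1, ?_⟩
  ext ⟨x, y, z⟩
  simp only [WSet, Relabel, Set.mem_setOf_eq]
  constructor
  · rintro ⟨h1, h2, ⟨hA, hz, hx⟩, n1, n2, n3, n4⟩
    obtain ⟨hxr, hyr, hzr⟩ := part1 ⟨x, y, z⟩ ⟨h1, h2, ⟨hA, hz, hx⟩, n1, n2, n3, n4⟩
    rw [if_neg hzr, if_neg hxr] at hA
    exact ⟨h1, h2, ⟨hA, hz, hx⟩,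
      fun h => n1 (Relation.TransGen.mono mono1 _ _ h), fun h => n2 (Relation.TransGen.mono mono1 _ _ h),
      fun h => n3 (Relation.TransGen.mono mono1 _ _ h), fun h => n4 (Relation.TransGen.mono mono1 _ _ h)⟩
  · rintro ⟨h1, h2, ⟨hA, hz, hx⟩, n1, n2, n3, n4⟩
    have hzV := (harc z x hA).1
    have hxV := (harc z x hA).2
    have hxr : x ≠ r := fun e => hrV (e ▸ hxV)
    have hzr : z ≠ r := fun e => hrV (e ▸ hzV)
    have hzlt : z < r := hdown z x hA (h1.trans h2)
    have hyr : y ≠ r := by omega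
    exact ⟨h1, h2, ⟨by rw [if_neg hzr, if_neg hxr]; exact hA, hz, hx⟩,
      key x y hxr hyr (by omega) n1,
      key y x hyr hxr (by omega) n2,
      key y z hyr hzr hzlt n3,
      key z y hzr hyr (by omega) n4⟩
end
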